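/- arXiv:1203.1640 — 6 statements merged into one kernel-verified Lean document; each statement's English description precedes it below -/
import Mathlib

section
/- For integers p ≥ 0 and q > 0 with q not divisible by n+1, writing q = (n+1)r + s with 1 ≤ s ≤ n, the full unfolding of the generator δ^((n+1)^p · q) under the relations δ^((n+1)k+ℓ) ↦ Σ_{j=1}^{n+1}(kδ + α_{j-1}^(ℓ)) (1 ≤ ℓ ≤ n) and δ^((n+1)k) ↦ δ^(k) + Σ_{j=1}^n (kδ_j) equals Σ_{j=1}^{n+1} (rδ + α_{j-1}^(s)) + Σ_{i=0}^{p-1} Σ_{j=1}^n ((n+1)^i q · δ_j). In particular, this unfolded expression has exactly n + 1 + np parts. -/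
/-- Generators for Kostant partition expressions in type A_n^(1):
`imag j m` is the part (m δ_j); `real c i ℓ` is the part (c δ + α_i^(ℓ));
`dsym m` is the formal symbol δ^(m). -/
inductive Gen (n : ℕ) : Type
  | imag : Fin n → ℕ → Gen n
  | real : ℕ → Fin (n+1) → ℕ → Gen n
  | dsym : ℕ → Gen n
  deriving DecidableEq

/-- Full unfolding of the symbol δ^(m) under the defining relations. -/
def unfoldDelta (n : ℕ) : ℕ → Multiset (Gen n)
  | 0 => 0
  | (m+1) =>
    if h0 : n = 0 then 0
    else if (m+1) % (n+1) = 0 then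
      unfoldDelta n ((m+1)/(n+1)) +
        Multiset.map (fun j : Fin n => Gen.imag j ((m+1)/(n+1))) Finset.univ.val
    else
      Multiset.map (fun j : Fin (n+1) => Gen.real ((m+1)/(n+1)) j ((m+1) % (n+1)))
        Finset.univ.val
  decreasing_by exact Nat.div_lt_self (Nat.succ_pos m) (by omega)

/-! Each factor `n + 1` of `(n + 1)^p * q` is peeled off by the relation for `δ^((n+1)k)`, leaving
the `n` imaginary parts `(n + 1)^i q δ_j`; once the argument is `q`, which `n + 1` does not
divide, the other relation ends the unfolding with the `n + 1` real parts `rδ + α_{j-1}^(s)`. -/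

theorem unfoldDelta_zero_left (m : ℕ) : unfoldDelta 0 m = 0 := by
  cases m <;> simp [unfoldDelta]

theorem unfoldDelta_of_not_dvd {n m : ℕ} (h : ¬ (n + 1) ∣ m) :
    unfoldDelta n m =
      Multiset.map (fun j : Fin (n+1) => Gen.real (m/(n+1)) j (m % (n+1))) Finset.univ.val := by
  obtain ⟨k, rfl⟩ : ∃ k, m = k + 1 := Nat.exists_eq_succ_of_ne_zero (by rintro rfl; simp at h)
  have hn : n ≠ 0 := by rintro rfl; simp at h
  rw [unfoldDelta, dif_neg hn, if_neg (mt Nat.dvd_of_mod_eq_zero h)]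

theorem unfoldDelta_succ_mul {n m : ℕ} (hm : m ≠ 0) :
    unfoldDelta n ((n + 1) * m) =
      unfoldDelta n m + Multiset.map (fun j : Fin n => Gen.imag j m) Finset.univ.val := by
  rcases eq_or_ne n 0 with rfl | hn
  · simp [unfoldDelta_zero_left]
  obtain ⟨k, hk⟩ : ∃ k, (n + 1) * m = k + 1 :=
    Nat.exists_eq_succ_of_ne_zero (mul_ne_zero n.succ_ne_zero hm)
  rw [hk, unfoldDelta, dif_neg hn, if_pos (by rw [← hk, Nat.mul_mod_right]), ← hk,
    Nat.mul_div_cancel_left m n.succ_pos]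

theorem unfoldDelta_pow_mul {n q : ℕ} (h : ¬ (n + 1) ∣ q) (p : ℕ) :
    unfoldDelta n ((n+1)^p * q) =
      Multiset.map (fun j : Fin (n+1) => Gen.real (q/(n+1)) j (q % (n+1))) Finset.univ.val
        + ∑ i ∈ Finset.range p,
            Multiset.map (fun j : Fin n => Gen.imag j ((n+1)^i * q)) Finset.univ.val := by
  have hq : q ≠ 0 := by rintro rfl; simp at h
  induction p with
  | zero => simp [unfoldDelta_of_not_dvd h]
  | succ p ih =>
    rw [pow_succ', mul_assoc, unfoldDelta_succ_mul (by positivity), ih, Finset.sum_range_succ,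
      add_assoc]

theorem unfoldDelta_eq_general (n p q : ℕ) (hnd : ¬ (n+1) ∣ q) :
    unfoldDelta n ((n+1)^p * q) =
      Multiset.map (fun j : Fin (n+1) => Gen.real (q/(n+1)) j (q % (n+1))) Finset.univ.val
        + ∑ i ∈ Finset.range p,
            Multiset.map (fun j : Fin n => Gen.imag j ((n+1)^i * q)) Finset.univ.val ∧
    Multiset.card (unfoldDelta n ((n+1)^p * q)) = n + 1 + n * p := by
  have h := unfoldDelta_pow_mul hnd p
  refine ⟨h, ?_⟩
  rw [h]
  simp [mul_comm]

/-- Lemma 3.5: for p ≥ 0 and q > 0 with (n+1) ∤ q, writing q = (n+1)r + s, 1 ≤ s ≤ n,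
the full unfolding of δ^((n+1)^p q) is
Σ_{j=1}^{n+1} (rδ + α_{j-1}^(s)) + Σ_{i=0}^{p-1} Σ_{j=1}^n ((n+1)^i q δ_j);
in particular it has exactly n + 1 + np parts. -/
theorem unfoldDelta_eq (n p q : ℕ) (hn : 1 ≤ n) (hq : 0 < q) (hnd : ¬ (n+1) ∣ q) :
    unfoldDelta n ((n+1)^p * q) =
      Multiset.map (fun j : Fin (n+1) => Gen.real (q/(n+1)) j (q % (n+1))) Finset.univ.val
        + ∑ i ∈ Finset.range p,
            Multiset.map (fun j : Fin n => Gen.imag j ((n+1)^i * q)) Finset.univ.val ∧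
    Multiset.card (unfoldDelta n ((n+1)^p * q)) = n + 1 + n * p :=
  unfoldDelta_eq_general n p q hnd
end

section
/- The reduction map ψ from the set K of Kostant partitions (nonnegative integer combinations of the generators in S_1) to the set K(∞) of reduced expressions is a bijection, with inverse the unfolding map φ. Equivalently, every element of K(∞) unfolds to a unique element of K and every element of K reduces to a unique reduced expression. -/
/-- The unfolding map φ on expressions: expand every δ^(m) symbol. -/
def unfoldExpr (n : ℕ) (e : Multiset (Gen n)) : Multiset (Gen n) :=
  e.bind (fun g => match g with
    | Gen.dsym m => unfoldDelta n m
    | g => {g})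

def ValidGen (n : ℕ) : Gen n → Prop
  | Gen.imag _ m => 0 < m
  | Gen.real _ _ ℓ => 1 ≤ ℓ ∧ ℓ ≤ n
  | Gen.dsym m => 0 < m

def IsDsym {n : ℕ} : Gen n → Prop
  | Gen.dsym _ => True
  | _ => False

/-- Membership in K: a Z_{≥0}-combination of the generators in S_1. -/
def IsK (n : ℕ) (e : Multiset (Gen n)) : Prop :=
  ∀ g ∈ e, ValidGen n g ∧ ¬ IsDsym g

/-- The expression contains parts that can be replaced by some δ^(k). -/
def HasRemovableDeltaExpr (n : ℕ) (e : Multiset (Gen n)) : Prop :=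
  ∃ k : ℕ, 0 < k ∧
    ((¬ (n+1) ∣ k ∧ ∀ i : Fin (n+1), Gen.real (k/(n+1)) i (k % (n+1)) ∈ e) ∨
     ((n+1) ∣ k ∧ Gen.dsym (k/(n+1)) ∈ e ∧ ∀ j : Fin n, Gen.imag j (k/(n+1)) ∈ e))

/-- Membership in K(∞): reduced expressions. -/
def IsKinf (n : ℕ) (e : Multiset (Gen n)) : Prop :=
  (∀ g ∈ e, ValidGen n g) ∧ ¬ HasRemovableDeltaExpr n e

/-!
Write `m = r (n+1)^a` with `n+1 ∤ r`: the unfolding of `δ^(m)` is the real layer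
`Σ_i (cδ + α_i^(ℓ))` with `r = (n+1)c + ℓ`, together with the imaginary layers of
`r (n+1)^s` for `s < a`. So a real part can only come from some `δ^(r (n+1)^t)`, and an
imaginary part `(qδ_j)` only from some `δ^(q (n+1)^s)` with `s ≥ 1`.

Injectivity: a reduced expression whose unfolding contains that of `δ^(m)` contains some
`δ^(m (n+1)^t)`, by induction along `r, r (n+1), …`: for `m = r` because its real layer cannot
be complete, and for `m = q (n+1)` because otherwise the imaginary layer of `q` would be literally
present next to the symbol `δ^(q)` provided by induction. Applied to the largest symbol `δ^(M)`
of two reduced expressions with the same unfolding, this forces `δ^(M)` to occur in both, and it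
can be cancelled.

Surjectivity: replace removable collections by their symbol `δ^(k)` until none is left; each
replacement trades `n + 1` parts for one, which terminates because `n ≥ 1`.
-/

@[elab_as_elim]
theorem Nat.mul_base_induction {b : ℕ} (hb : 1 < b) {P : ℕ → Prop} (zero : P 0)
    (not_dvd : ∀ m, ¬ b ∣ m → P m) (mul : ∀ q, 0 < q → P q → P (q * b)) (m : ℕ) : P m := by
  induction m using Nat.strong_induction_on with
  | _ m ih =>
    by_cases hd : b ∣ m
    · obtain ⟨q, rfl⟩ := hd
      rcases Nat.eq_zero_or_pos q with rfl | hq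
      · simpa using zero
      · rw [mul_comm]
        exact mul q hq (ih q (lt_mul_left hq hb))
    · exact not_dvd m hd

section Unfolding

variable {n : ℕ}

def imagLayer (n q : ℕ) : Multiset (Gen n) :=
  Finset.univ.val.map fun j : Fin n => Gen.imag j q

def realLayer (n c ℓ : ℕ) : Multiset (Gen n) :=
  Finset.univ.val.map fun i : Fin (n+1) => Gen.real c i ℓ

lemma unfoldDelta_of_not_dvd_s3 (hn : 0 < n) {m : ℕ} (hm : ¬ (n+1) ∣ m) :
    unfoldDelta n m = realLayer n (m / (n+1)) (m % (n+1)) := by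
  obtain ⟨m, rfl⟩ : ∃ k, m = k + 1 := Nat.exists_eq_succ_of_ne_zero (by rintro rfl; simp at hm)
  rw [unfoldDelta, dif_neg hn.ne', if_neg (mt Nat.dvd_of_mod_eq_zero hm)]
  rfl

lemma unfoldDelta_mul_succ (hn : 0 < n) {q : ℕ} (hq : 0 < q) :
    unfoldDelta n (q * (n+1)) = unfoldDelta n q + imagLayer n q := by
  obtain ⟨m, hm⟩ : ∃ k, q * (n+1) = k + 1 := Nat.exists_eq_succ_of_ne_zero (by positivity)
  have hdiv : q * (n+1) / (n+1) = q := Nat.mul_div_cancel q n.succ_pos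
  rw [hm, unfoldDelta, dif_neg hn.ne', if_pos (by rw [← hm, Nat.mul_mod_left]), ← hm, hdiv]
  rfl

lemma isK_unfoldDelta (hn : 0 < n) (m : ℕ) : IsK n (unfoldDelta n m) := by
  induction m using Nat.mul_base_induction (b := n+1) (by omega) with
  | zero => simp [IsK, unfoldDelta]
  | not_dvd m hm =>
    have hℓ : m % (n+1) ≠ 0 := mt Nat.dvd_of_mod_eq_zero hm
    have hℓn : m % (n+1) < n+1 := Nat.mod_lt _ n.succ_pos
    simp only [IsK, unfoldDelta_of_not_dvd_s3 hn hm, realLayer, Multiset.mem_map]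
    rintro _ ⟨i, -, rfl⟩
    exact ⟨⟨by omega, by omega⟩, id⟩
  | mul q hq ih =>
    simp only [IsK, unfoldDelta_mul_succ hn hq, imagLayer, Multiset.mem_add, Multiset.mem_map]
    rintro _ (hg | ⟨j, -, rfl⟩)
    exacts [ih _ hg, ⟨hq, id⟩]

lemma imag_mem_unfoldDelta (hn : 0 < n) {j : Fin n} {q m : ℕ}
    (h : Gen.imag j q ∈ unfoldDelta n m) : ∃ s, 0 < s ∧ m = q * (n+1)^s := by
  induction m using Nat.mul_base_induction (b := n+1) (by omega) with
  | zero => simp [unfoldDelta] at h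
  | not_dvd m hm => simp [unfoldDelta_of_not_dvd_s3 hn hm, realLayer] at h
  | mul q' hq' ih =>
    rw [unfoldDelta_mul_succ hn hq', Multiset.mem_add] at h
    rcases h with h | h
    · obtain ⟨s, hs, rfl⟩ := ih h
      exact ⟨s + 1, s.succ_pos, by ring⟩
    · obtain ⟨_, -, he⟩ := Multiset.mem_map.1 h
      obtain ⟨-, rfl⟩ := Gen.imag.inj he
      exact ⟨1, one_pos, by ring⟩

lemma real_mem_unfoldDelta (hn : 0 < n) {c ℓ m : ℕ} {i : Fin (n+1)}
    (h : Gen.real c i ℓ ∈ unfoldDelta n m) : ∃ t, m = ((n+1) * c + ℓ) * (n+1)^t := by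
  induction m using Nat.mul_base_induction (b := n+1) (by omega) with
  | zero => simp [unfoldDelta] at h
  | not_dvd m hm =>
    obtain ⟨_, -, he⟩ := Multiset.mem_map.1 (unfoldDelta_of_not_dvd_s3 hn hm ▸ h)
    obtain ⟨rfl, -, rfl⟩ := Gen.real.inj he
    exact ⟨0, by rw [pow_zero, mul_one, Nat.div_add_mod]⟩
  | mul q hq ih =>
    rw [unfoldDelta_mul_succ hn hq, Multiset.mem_add] at h
    rcases h with h | h
    · obtain ⟨t, rfl⟩ := ih h
      exact ⟨t + 1, by ring⟩
    · simp [imagLayer] at h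

lemma unfoldExpr_add (s t : Multiset (Gen n)) :
    unfoldExpr n (s + t) = unfoldExpr n s + unfoldExpr n t :=
  Multiset.add_bind _ _ _

lemma unfoldExpr_cons_dsym (m : ℕ) (s : Multiset (Gen n)) :
    unfoldExpr n (Gen.dsym m ::ₘ s) = unfoldDelta n m + unfoldExpr n s :=
  Multiset.cons_bind _ _ _

lemma unfoldExpr_eq_self {e : Multiset (Gen n)} (h : ∀ m, Gen.dsym m ∉ e) :
    unfoldExpr n e = e := by
  calc unfoldExpr n e = e.bind fun g => {g} := Multiset.bind_congr fun g hg => by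
          cases g with
          | dsym m => exact absurd hg (h m)
          | imag => rfl
          | real => rfl
    _ = e := by rw [Multiset.bind_singleton, Multiset.map_id']

lemma mem_unfoldExpr {g : Gen n} {e : Multiset (Gen n)} (h : g ∈ unfoldExpr n e) :
    (g ∈ e ∧ ¬ IsDsym g) ∨ ∃ m, Gen.dsym m ∈ e ∧ g ∈ unfoldDelta n m := by
  obtain ⟨a, ha, hg⟩ := Multiset.mem_bind.1 h
  cases a with
  | dsym m => exact Or.inr ⟨m, ha, hg⟩
  | imag => obtain rfl := Multiset.mem_singleton.1 hg; exact Or.inl ⟨ha, id⟩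
  | real => obtain rfl := Multiset.mem_singleton.1 hg; exact Or.inl ⟨ha, id⟩

lemma unfoldDelta_le_unfoldExpr {m : ℕ} {e : Multiset (Gen n)} (h : Gen.dsym m ∈ e) :
    unfoldDelta n m ≤ unfoldExpr n e := by
  rw [← Multiset.cons_erase h, unfoldExpr_cons_dsym]
  exact Multiset.le_add_right _ _

lemma isK_unfoldExpr (hn : 0 < n) {e : Multiset (Gen n)} (he : ∀ g ∈ e, ValidGen n g) :
    IsK n (unfoldExpr n e) := fun g hg =>
  (mem_unfoldExpr hg).elim (fun ⟨hge, hg⟩ => ⟨he g hge, hg⟩)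
    fun ⟨m, _, hgm⟩ => isK_unfoldDelta hn m g hgm

end Unfolding


section Reduction

variable {n : ℕ}

lemma IsKinf.of_le {e e' : Multiset (Gen n)} (h : IsKinf n e) (hle : e' ≤ e) : IsKinf n e' := by
  refine ⟨fun g hg => h.1 g (Multiset.mem_of_le hle hg), fun ⟨k, hk, hc⟩ => h.2 ⟨k, hk, ?_⟩⟩
  rcases hc with ⟨hkd, hreal⟩ | ⟨hkd, hdsym, himag⟩
  · exact Or.inl ⟨hkd, fun i => Multiset.mem_of_le hle (hreal i)⟩
  · exact Or.inr ⟨hkd, Multiset.mem_of_le hle hdsym, fun j => Multiset.mem_of_le hle (himag j)⟩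

lemma exists_dsym_mul_pow_mem (hn : 0 < n) {f : Multiset (Gen n)}
    (hf : ¬ HasRemovableDeltaExpr n f) {m : ℕ} (hm : 0 < m)
    (hsub : unfoldDelta n m ⊆ unfoldExpr n f) : ∃ t, Gen.dsym (m * (n+1)^t) ∈ f := by
  induction m using Nat.mul_base_induction (b := n+1) (by omega) with
  | zero => exact absurd hm (lt_irrefl 0)
  | not_dvd m hmd =>
    obtain ⟨i, hi⟩ : ∃ i, Gen.real (m / (n+1)) i (m % (n+1)) ∉ f := by
      by_contra! hall
      exact hf ⟨m, hm, Or.inl ⟨hmd, hall⟩⟩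
    have hmem : Gen.real (m / (n+1)) i (m % (n+1)) ∈ unfoldDelta n m := by
      rw [unfoldDelta_of_not_dvd_s3 hn hmd]
      exact Multiset.mem_map_of_mem _ (Finset.mem_univ i)
    rcases mem_unfoldExpr (hsub hmem) with ⟨hf', -⟩ | ⟨m', hm', hmem'⟩
    · exact absurd hf' hi
    · obtain ⟨t, rfl⟩ := real_mem_unfoldDelta hn hmem'
      rw [Nat.div_add_mod] at hm'
      exact ⟨t, hm'⟩
  | mul q hq ih =>
    by_contra! hnone
    have hnone' : ∀ s, 0 < s → Gen.dsym (q * (n+1)^s) ∉ f := fun s hs => by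
      obtain ⟨t, rfl⟩ := Nat.exists_eq_add_of_lt hs
      simpa [pow_succ', mul_assoc] using hnone t
    have himag : ∀ j, Gen.imag j q ∈ f := fun j => by
      have hmem : Gen.imag j q ∈ unfoldDelta n (q * (n+1)) := by
        rw [unfoldDelta_mul_succ hn hq]
        exact Multiset.mem_add.2 (Or.inr (Multiset.mem_map_of_mem _ (Finset.mem_univ j)))
      rcases mem_unfoldExpr (hsub hmem) with ⟨hf', -⟩ | ⟨m', hm', hmem'⟩
      · exact hf'
      · obtain ⟨s, hs, rfl⟩ := imag_mem_unfoldDelta hn hmem'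
        exact absurd hm' (hnone' s hs)
    have hsub' : unfoldDelta n q ⊆ unfoldExpr n f := fun g hg =>
      hsub (by rw [unfoldDelta_mul_succ hn hq]; exact Multiset.mem_add.2 (Or.inl hg))
    obtain ⟨t, ht⟩ := ih hq hsub'
    rcases Nat.eq_zero_or_pos t with rfl | htpos
    · have hdiv : q * (n+1) / (n+1) = q := Nat.mul_div_cancel q n.succ_pos
      refine hf ⟨q * (n+1), by positivity, Or.inr ⟨dvd_mul_left _ _, ?_, ?_⟩⟩
      · simpa [hdiv] using ht
      · simpa [hdiv] using himag
    · exact hnone' t htpos ht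

lemma dsym_mem_of_unfoldExpr_eq (hn : 0 < n) {f₁ f₂ : Multiset (Gen n)}
    (hf₂ : ¬ HasRemovableDeltaExpr n f₂) (hu : unfoldExpr n f₁ = unfoldExpr n f₂) {M : ℕ}
    (hM0 : 0 < M) (hM : Gen.dsym M ∈ f₁) (hmax : ∀ m, Gen.dsym m ∈ f₂ → m ≤ M) :
    Gen.dsym M ∈ f₂ := by
  have hsub : unfoldDelta n M ⊆ unfoldExpr n f₂ :=
    hu ▸ Multiset.subset_of_le (unfoldDelta_le_unfoldExpr hM)
  obtain ⟨t, ht⟩ := exists_dsym_mul_pow_mem hn hf₂ hM0 hsub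
  obtain rfl : t = 0 := by
    by_contra htne
    have : M * 1 < M * (n+1)^t := Nat.mul_lt_mul_of_pos_left (Nat.one_lt_pow htne (by omega)) hM0
    have := hmax _ ht
    omega
  simpa using ht

lemma exists_max_dsym_mem {e : Multiset (Gen n)} (h : ∃ m, Gen.dsym m ∈ e) :
    ∃ M, Gen.dsym M ∈ e ∧ ∀ m, Gen.dsym m ∈ e → m ≤ M := by
  have hfin : {m | Gen.dsym m ∈ e}.Finite :=
    (e.toFinset.finite_toSet.preimage fun _ _ _ _ h => Gen.dsym.inj h).subset
      fun _ hm => Multiset.mem_toFinset.2 hm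
  exact ⟨sSup _, Nat.sSup_mem h hfin.bddAbove, fun m hm => le_csSup hfin.bddAbove hm⟩

lemma unfoldExpr_injOn (hn : 0 < n) : Set.InjOn (unfoldExpr n) {e | IsKinf n e} := by
  intro f₁ h₁ f₂ h₂ hu
  induction f₁ using Multiset.strongInductionOn generalizing f₂ with
  | ih f₁ ih =>
  by_cases hd : ∃ m, Gen.dsym m ∈ f₁ + f₂
  · obtain ⟨M, hM, hmax⟩ := exists_max_dsym_mem hd
    have hmax₁ m (hm : Gen.dsym m ∈ f₁) := hmax m (Multiset.mem_add.2 (Or.inl hm))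
    have hmax₂ m (hm : Gen.dsym m ∈ f₂) := hmax m (Multiset.mem_add.2 (Or.inr hm))
    obtain ⟨hM₁, hM₂⟩ : Gen.dsym M ∈ f₁ ∧ Gen.dsym M ∈ f₂ := by
      rcases Multiset.mem_add.1 hM with hM | hM
      · exact ⟨hM, dsym_mem_of_unfoldExpr_eq hn h₂.2 hu (h₁.1 _ hM) hM hmax₂⟩
      · exact ⟨dsym_mem_of_unfoldExpr_eq hn h₁.2 hu.symm (h₂.1 _ hM) hM hmax₁, hM⟩
    rw [← Multiset.cons_erase hM₁, ← Multiset.cons_erase hM₂] at hu ⊢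
    rw [unfoldExpr_cons_dsym, unfoldExpr_cons_dsym] at hu
    rw [ih _ (Multiset.erase_lt.2 hM₁) (h₁.of_le (Multiset.erase_le _ _))
      (h₂.of_le (Multiset.erase_le _ _)) (add_left_cancel hu)]
  · push Not at hd
    rw [← unfoldExpr_eq_self fun m hm => hd m (Multiset.mem_add.2 (Or.inl hm)), hu,
      unfoldExpr_eq_self fun m hm => hd m (Multiset.mem_add.2 (Or.inr hm))]

lemma exists_le_of_hasRemovableDeltaExpr (hn : 0 < n) {e : Multiset (Gen n)}
    (h : HasRemovableDeltaExpr n e) : ∃ k, 0 < k ∧ ∃ L ≤ e,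
      Multiset.card L = n + 1 ∧ unfoldExpr n L = unfoldDelta n k := by
  obtain ⟨k, hk, ⟨hkd, hreal⟩ | ⟨hkd, hdsym, himag⟩⟩ := h
  · have hnodup : (realLayer n (k / (n+1)) (k % (n+1))).Nodup :=
      Finset.univ.nodup.map fun _ _ h => (Gen.real.inj h).2.1
    refine ⟨k, hk, _, (Multiset.le_iff_subset hnodup).2 ?_, by simp [realLayer], ?_⟩
    · intro g hg
      obtain ⟨i, -, rfl⟩ := Multiset.mem_map.1 hg
      exact hreal i
    · rw [unfoldDelta_of_not_dvd_s3 hn hkd, unfoldExpr_eq_self]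
      simp [realLayer]
  · obtain ⟨q, rfl⟩ := hkd
    have hq : 0 < q := Nat.pos_of_mul_pos_left hk
    rw [Nat.mul_div_cancel_left q n.succ_pos] at hdsym himag
    have hnodup : (Gen.dsym q ::ₘ imagLayer n q).Nodup :=
      Multiset.nodup_cons.2 ⟨by simp [imagLayer],
        Finset.univ.nodup.map fun _ _ h => (Gen.imag.inj h).1⟩
    refine ⟨q * (n+1), by positivity, _, (Multiset.le_iff_subset hnodup).2 ?_, by simp [imagLayer], ?_⟩
    · refine Multiset.cons_subset.2 ⟨hdsym, fun g hg => ?_⟩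
      obtain ⟨j, -, rfl⟩ := Multiset.mem_map.1 hg
      exact himag j
    · rw [unfoldDelta_mul_succ hn hq, unfoldExpr_cons_dsym, unfoldExpr_eq_self]
      simp [imagLayer]

lemma exists_isKinf_unfoldExpr_eq (hn : 0 < n) (e : Multiset (Gen n))
    (he : ∀ g ∈ e, ValidGen n g) : ∃ f, IsKinf n f ∧ unfoldExpr n f = unfoldExpr n e := by
  by_cases hr : HasRemovableDeltaExpr n e
  · obtain ⟨k, hk, L, hLe, hcard, hL⟩ := exists_le_of_hasRemovableDeltaExpr hn hr
    have hlt : Multiset.card (Gen.dsym k ::ₘ (e - L)) < Multiset.card e := by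
      have := Multiset.card_le_card hLe
      rw [Multiset.card_cons, Multiset.card_sub hLe]
      omega
    have hvalid : ∀ g ∈ Gen.dsym k ::ₘ (e - L), ValidGen n g := by
      simp only [Multiset.mem_cons, forall_eq_or_imp]
      exact ⟨hk, fun g hg => he g (Multiset.mem_of_le (Multiset.sub_le_self _ _) hg)⟩
    obtain ⟨f, hf, hfu⟩ := exists_isKinf_unfoldExpr_eq hn _ hvalid
    refine ⟨f, hf, ?_⟩
    rw [hfu, unfoldExpr_cons_dsym, ← hL, ← unfoldExpr_add, add_tsub_cancel_of_le hLe]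
  · exact ⟨e, ⟨he, hr⟩, rfl⟩
termination_by Multiset.card e
decreasing_by simpa using hlt

end Reduction

/-- Lemma 3.4: the reduction map ψ : K → K(∞) is a bijection whose inverse is the
unfolding map φ : K(∞) → K. Equivalently, the unfolding map φ restricts to a bijection
from the set K(∞) of reduced expressions onto the set K of Kostant partitions. -/
theorem reduction_unfolding_bijection (n : ℕ) (hn : 1 ≤ n) :
    Set.BijOn (unfoldExpr n) {e | IsKinf n e} {e | IsK n e} := by
  refine ⟨fun e he => isK_unfoldExpr hn he.1, unfoldExpr_injOn hn, fun e he => ?_⟩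
  obtain ⟨f, hf, hfe⟩ := exists_isKinf_unfoldExpr_eq hn e fun g hg => (he g hg).1
  exact ⟨f, hf, hfe.trans (unfoldExpr_eq_self fun m hm => (he _ hm).2 trivial)⟩
end

section
/- The map Ψ from reduced proper generalized Young walls to reduced Kostant partitions, sending the k-th row of Y with N boxes (k ≡ j mod n+1, 1 ≤ j ≤ n) to the part (kδ_j) if N = (n+1)k', to (k'δ + α_{j-1}^(ℓ)) if N = (n+1)k' + ℓ with 1 ≤ ℓ ≤ n, and sending rows in positions ≡ 0 mod n+1 with N = (n+1)k' boxes to δ^(k') and with N = (n+1)k' + ℓ boxes to (k'δ + α_n^(ℓ)), is a bijection Y(∞) → K(∞), with inverse Φ given by forming, for each part, a row of the prescribed length in the prescribed residue class, arranged in weakly decreasing order within each residue class. -/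
/- Generalized Young walls, encoded by their sequence of row lengths:
`Y r` is the number of boxes in the (r+1)-st row from the bottom. -/

def IsProper (n : ℕ) (Y : ℕ →₀ ℕ) : Prop :=
  ∀ r s : ℕ, r ≤ s → r % (n+1) = s % (n+1) → Y s ≤ Y r

/-- `aCount n Y i k` is the number of i-colored boxes in the k-th column of Y. -/
def aCount (n : ℕ) (Y : ℕ →₀ ℕ) (i : ZMod (n+1)) (k : ℕ) : ℕ :=
  (Y.support.filter (fun r => k ≤ Y r ∧ (((r : ℤ) + 1 - (k : ℤ) : ℤ) : ZMod (n+1)) = i)).card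

/-- Some column of Y contains a removable δ. -/
def HasRemovableDelta (n : ℕ) (Y : ℕ →₀ ℕ) : Prop :=
  ∃ k : ℕ, 1 ≤ k ∧ ∀ i : ZMod (n+1), aCount n Y (i - 1) (k+1) < aCount n Y i k

/-- Reduced proper generalized Young walls. -/
def IsYinf (n : ℕ) (Y : ℕ →₀ ℕ) : Prop :=
  IsProper n Y ∧ ¬ HasRemovableDelta n Y

def resFin (n r : ℕ) : Fin (n+1) := ⟨(r+1) % (n+1), Nat.mod_lt _ (Nat.succ_pos n)⟩

/-- The Kostant partition part(s) assigned to a row in residue class j (of row number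
mod n+1) with N boxes. -/
def rowPart (n : ℕ) (j : Fin (n+1)) (N : ℕ) : Multiset (Gen n) :=
  if N = 0 then 0
  else if hj : j.val = 0 then
    if N % (n+1) = 0 then {Gen.dsym (N/(n+1))}
    else {Gen.real (N/(n+1)) (Fin.last n) (N % (n+1))}
  else
    if N % (n+1) = 0 then {Gen.imag ⟨j.val - 1, by have := j.isLt; omega⟩ (N/(n+1))}
    else {Gen.real (N/(n+1)) ⟨j.val - 1, by have := j.isLt; omega⟩ (N % (n+1))}

/-- The map Ψ from generalized Young walls to Kostant partition expressions. -/
def PsiMap (n : ℕ) (Y : ℕ →₀ ℕ) : Multiset (Gen n) :=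
  Y.support.val.bind (fun r => rowPart n (resFin n r) (Y r))

/-!
Ψ acts row by row. A nonempty row is described by its residue class `j` and its length `N`,
and `(j, N) ↦ genOfRow n j N` is a bijection from such pairs onto the valid generators, with
inverse `rowOfGen`; so Ψ is a relabelling of the multiset `rows n Y` of these pairs. Within a
residue class the rows of a proper wall are weakly decreasing, so a proper wall is determined by
`rows n Y`, and every multiset of pairs with positive lengths arises: insert the parts in
increasing order of length, each on top of its class. Finally, column `k` of `Y` contains a
removable δ exactly when every residue class has a row of length exactly `k`, which is what a
removable `δ^(k)` means for the relabelled expression.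
-/

lemma Finset.card_filter_lt_card_iff {α : Type*} (s : Finset α) (p : α → Prop)
    [DecidablePred p] : (s.filter p).card < s.card ↔ ∃ x ∈ s, ¬p x := by
  rw [← Finset.card_filter_add_card_filter_not p (s := s), Nat.lt_add_right_iff_pos,
    Finset.card_pos, Finset.filter_nonempty_iff]

lemma Finset.mem_iff_card_filter_range_lt {p : ℕ → Prop} [DecidablePred p] {T : Finset ℕ}
    (hT : ∀ s ∈ T, p s) (hdown : ∀ s ∈ T, ∀ s' ≤ s, p s' → s' ∈ T) {r : ℕ} (hr : p r) :
    r ∈ T ↔ ((Finset.range r).filter p).card < T.card := by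
  constructor
  · intro hrT
    calc ((Finset.range r).filter p).card < ((Finset.range (r+1)).filter p).card := by
          rw [Finset.range_add_one, Finset.filter_insert, if_pos hr,
            Finset.card_insert_of_notMem (by simp)]
          omega
      _ ≤ T.card := Finset.card_le_card fun s hs => by
          rw [Finset.mem_filter, Finset.mem_range] at hs
          exact hdown r hrT s (by omega) hs.2
  · intro hlt
    by_contra hrT
    refine hlt.not_ge (Finset.card_le_card fun s hs => ?_)
    rw [Finset.mem_filter, Finset.mem_range]
    refine ⟨?_, hT s hs⟩
    by_contra hge
    exact hrT (hdown s hs r (by omega) hr)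

section YoungWall

variable {n : ℕ}

/-- `j - 1` is taken in `Fin (n+1)`, so rows of class `0` give the real roots `α_n^(ℓ)`. -/
def genOfRow (n : ℕ) (j : Fin (n+1)) (N : ℕ) : Gen n :=
  if N % (n+1) = 0 then Fin.cases (Gen.dsym (N / (n+1))) (fun i => Gen.imag i (N / (n+1))) j
  else Gen.real (N / (n+1)) (j - 1) (N % (n+1))

def rowOfGen (n : ℕ) : Gen n → Fin (n+1) × ℕ
  | .imag i m => (i.succ, (n+1) * m)
  | .real c i ℓ => (i + 1, (n+1) * c + ℓ)
  | .dsym m => (0, (n+1) * m)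

lemma rowPart_eq_singleton (j : Fin (n+1)) {N : ℕ} (hN : N ≠ 0) :
    rowPart n j N = {genOfRow n j N} := by
  cases j using Fin.cases <;> by_cases h : N % (n+1) = 0 <;>
    simp [rowPart, genOfRow, hN, h, Fin.ext_iff, Fin.coe_sub_one]

lemma rowOfGen_genOfRow (j : Fin (n+1)) (N : ℕ) : rowOfGen n (genOfRow n j N) = (j, N) := by
  unfold genOfRow
  split_ifs with h
  · cases j using Fin.cases <;> simp [rowOfGen, Nat.mul_div_cancel' (Nat.dvd_of_mod_eq_zero h)]
  · simp [rowOfGen, Nat.div_add_mod]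

lemma genOfRow_rowOfGen {g : Gen n} (hg : ValidGen n g) :
    genOfRow n (rowOfGen n g).1 (rowOfGen n g).2 = g := by
  cases g with
  | imag i m => simp [rowOfGen, genOfRow]
  | dsym m => simp [rowOfGen, genOfRow]
  | real c i ℓ =>
    obtain ⟨h1, h2⟩ := hg
    have hmod : ((n+1) * c + ℓ) % (n+1) = ℓ := by
      rw [Nat.mul_add_mod, Nat.mod_eq_of_lt (by omega)]
    have hdiv : ((n+1) * c + ℓ) / (n+1) = c := by
      rw [Nat.mul_add_div (by omega), Nat.div_eq_of_lt (by omega), add_zero]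
    show genOfRow n (i + 1) ((n+1) * c + ℓ) = .real c i ℓ
    rw [genOfRow, hmod, hdiv, if_neg (by omega), add_sub_cancel_right]

lemma validGen_genOfRow (j : Fin (n+1)) {N : ℕ} (hN : N ≠ 0) :
    ValidGen n (genOfRow n j N) := by
  unfold genOfRow
  split_ifs with h
  · have hpos : 0 < N / (n+1) :=
      Nat.div_pos (Nat.le_of_dvd (by omega) (Nat.dvd_of_mod_eq_zero h)) (by omega)
    cases j using Fin.cases <;> exact hpos
  · exact ⟨by omega, Nat.le_of_lt_succ (Nat.mod_lt _ (by omega))⟩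

lemma rowOfGen_snd_pos {g : Gen n} (hg : ValidGen n g) : 0 < (rowOfGen n g).2 := by
  cases g with
  | imag i m => exact Nat.mul_pos (by omega) hg
  | dsym m => exact Nat.mul_pos (by omega) hg
  | real c i ℓ => exact Nat.add_pos_right _ hg.1

def rows (n : ℕ) (Y : ℕ →₀ ℕ) : Multiset (Fin (n+1) × ℕ) :=
  Y.support.val.map fun r => (resFin n r, Y r)

lemma pos_of_mem_rows {Y : ℕ →₀ ℕ} {p : Fin (n+1) × ℕ} (hp : p ∈ rows n Y) :
    0 < p.2 := by
  obtain ⟨r, hr, rfl⟩ := Multiset.mem_map.mp hp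
  exact Nat.pos_of_ne_zero (Finsupp.mem_support_iff.mp hr)

lemma mem_rows_iff {Y : ℕ →₀ ℕ} {j : Fin (n+1)} {k : ℕ} (hk : 0 < k) :
    (j, k) ∈ rows n Y ↔ ∃ r, resFin n r = j ∧ Y r = k := by
  simp only [rows, Multiset.mem_map, Finset.mem_val, Finsupp.mem_support_iff, Prod.mk.injEq]
  exact ⟨fun ⟨r, _, h⟩ => ⟨r, h⟩, fun ⟨r, h⟩ => ⟨r, by omega, h⟩⟩

lemma psiMap_eq_map_rows (Y : ℕ →₀ ℕ) :
    PsiMap n Y = (rows n Y).map (Function.uncurry (genOfRow n)) := by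
  rw [PsiMap, rows, Multiset.map_map, ← Multiset.bind_singleton]
  exact Multiset.bind_congr fun r hr =>
    rowPart_eq_singleton _ (Finsupp.mem_support_iff.mp hr)

lemma map_rowOfGen_psiMap (Y : ℕ →₀ ℕ) : (PsiMap n Y).map (rowOfGen n) = rows n Y := by
  rw [psiMap_eq_map_rows, Multiset.map_map]
  exact (Multiset.map_congr rfl fun p _ => rowOfGen_genOfRow p.1 p.2).trans (Multiset.map_id _)

lemma validGen_of_mem_psiMap {Y : ℕ →₀ ℕ} {g : Gen n} (hg : g ∈ PsiMap n Y) :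
    ValidGen n g := by
  rw [psiMap_eq_map_rows] at hg
  obtain ⟨p, hp, rfl⟩ := Multiset.mem_map.mp hg
  exact validGen_genOfRow p.1 (pos_of_mem_rows hp).ne'

lemma genOfRow_mem_psiMap_iff {Y : ℕ →₀ ℕ} {j : Fin (n+1)} {k : ℕ} :
    genOfRow n j k ∈ PsiMap n Y ↔ (j, k) ∈ rows n Y := by
  refine ⟨fun h => ?_, fun h => ?_⟩
  · simpa [rowOfGen_genOfRow, map_rowOfGen_psiMap] using Multiset.mem_map_of_mem (rowOfGen n) h
  · rw [psiMap_eq_map_rows]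
    exact Multiset.mem_map_of_mem _ h

lemma hasRemovableDeltaExpr_iff {e : Multiset (Gen n)} :
    HasRemovableDeltaExpr n e ↔ ∃ k, 0 < k ∧ ∀ j : Fin (n+1), genOfRow n j k ∈ e := by
  refine exists_congr fun k => and_congr_right fun _ => ?_
  by_cases hd : (n+1) ∣ k
  · simp [hd, genOfRow, Nat.mod_eq_zero_of_dvd hd, Fin.forall_fin_succ]
  · have hmod : k % (n+1) ≠ 0 := fun h => hd (Nat.dvd_of_mod_eq_zero h)
    simp only [hd, genOfRow, hmod, false_and, or_false, not_false_eq_true, true_and, if_false]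
    exact ((Equiv.subRight (1 : Fin (n+1))).forall_congr_right).symm

lemma aCount_lt_aCount_iff {Y : ℕ →₀ ℕ} {k : ℕ} (hk : 0 < k) (i : ZMod (n+1)) :
    aCount n Y (i - 1) (k+1) < aCount n Y i k ↔
      ∃ r, Y r = k ∧ (((r : ℤ) + 1 - (k : ℤ) : ℤ) : ZMod (n+1)) = i := by
  have hshift : aCount n Y (i - 1) (k+1) =
      ((Y.support.filter fun r => k ≤ Y r ∧
          (((r : ℤ) + 1 - (k : ℤ) : ℤ) : ZMod (n+1)) = i).filter
        fun r => Y r ≠ k).card := by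
    rw [aCount, Finset.filter_filter]
    congr 1
    refine Finset.filter_congr fun r _ => ?_
    push_cast
    rw [show (r : ZMod (n+1)) + 1 - (k + 1) = r + 1 - k - 1 by ring, sub_left_inj]
    exact ⟨fun ⟨_, hi⟩ => ⟨⟨by omega, hi⟩, by omega⟩, fun ⟨⟨_, hi⟩, _⟩ => ⟨by omega, hi⟩⟩
  rw [hshift, aCount, Finset.card_filter_lt_card_iff]
  simp only [Finset.mem_filter, Finsupp.mem_support_iff, not_not]
  exact ⟨fun ⟨r, ⟨_, _, hi⟩, hr⟩ => ⟨r, hr, hi⟩,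
    fun ⟨r, hr, hi⟩ => ⟨r, ⟨by omega, by omega, hi⟩, hr⟩⟩

lemma finEquiv_resFin (r : ℕ) : ZMod.finEquiv (n+1) (resFin n r) = (r : ZMod (n+1)) + 1 := by
  apply ZMod.val_injective
  rw [← Nat.cast_succ, ZMod.val_natCast]
  rfl

lemma hasRemovableDelta_iff {Y : ℕ →₀ ℕ} :
    HasRemovableDelta n Y ↔ ∃ k, 0 < k ∧ ∀ j : Fin (n+1), (j, k) ∈ rows n Y := by
  refine exists_congr fun k => and_congr_right fun hk => ?_
  simp_rw [aCount_lt_aCount_iff hk, mem_rows_iff hk]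
  rw [← ((ZMod.finEquiv (n+1)).toEquiv.trans
    (Equiv.subRight (k : ZMod (n+1)))).forall_congr_right]
  refine forall_congr' fun j => exists_congr fun r => ?_
  simp [← finEquiv_resFin, and_comm]

lemma hasRemovableDelta_iff_psiMap {Y : ℕ →₀ ℕ} :
    HasRemovableDelta n Y ↔ HasRemovableDeltaExpr n (PsiMap n Y) := by
  simp_rw [hasRemovableDelta_iff, hasRemovableDeltaExpr_iff, genOfRow_mem_psiMap_iff]

lemma resFin_eq_resFin_iff {r s : ℕ} : resFin n r = resFin n s ↔ r % (n+1) = s % (n+1) :=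
  Fin.ext_iff.trans ⟨Nat.ModEq.add_right_cancel' 1, Nat.ModEq.add_right 1⟩

lemma le_apply_iff_of_isProper {Y : ℕ →₀ ℕ} (hY : IsProper n Y) {v : ℕ} (hv : 0 < v)
    (r : ℕ) :
    v ≤ Y r ↔ ((Finset.range r).filter fun s => resFin n s = resFin n r).card <
      (rows n Y).countP fun p => p.1 = resFin n r ∧ v ≤ p.2 := by
  have hcount : (rows n Y).countP (fun p => p.1 = resFin n r ∧ v ≤ p.2) =
      (Y.support.filter fun s => resFin n s = resFin n r ∧ v ≤ Y s).card := by
    rw [rows, Multiset.countP_map]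
    rfl
  -- The rows of this class with at least `v` boxes form an initial segment of the class.
  rw [hcount, ← Finset.mem_iff_card_filter_range_lt (p := fun s => resFin n s = resFin n r)
    (fun s hs => (Finset.mem_filter.mp hs).2.1) _ rfl]
  · simp only [Finset.mem_filter, Finsupp.mem_support_iff, true_and]
    omega
  · simp only [Finset.mem_filter, Finsupp.mem_support_iff]
    rintro s ⟨-, hcls, hvs⟩ s' hs's hcls'
    have hle : Y s ≤ Y s' := hY s' s hs's (resFin_eq_resFin_iff.mp (hcls'.trans hcls.symm))
    exact ⟨by omega, hcls', by omega⟩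

lemma eq_of_rows_eq {Y Y' : ℕ →₀ ℕ} (hY : IsProper n Y) (hY' : IsProper n Y')
    (h : rows n Y = rows n Y') : Y = Y' := by
  ext r
  refine eq_of_forall_le_iff fun v => ?_
  rcases Nat.eq_zero_or_pos v with rfl | hv
  · simp
  · rw [le_apply_iff_of_isProper hY hv, le_apply_iff_of_isProper hY' hv, h]

lemma rows_update {Y : ℕ →₀ ℕ} {r N : ℕ} (hr : Y r = 0) (hN : N ≠ 0) :
    rows n (Y.update r N) = (resFin n r, N) ::ₘ rows n Y := by
  rw [rows, Finsupp.support_update_ne_zero _ _ hN,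
    Finset.insert_val_of_notMem (Finsupp.notMem_support_iff.mpr hr), Multiset.map_cons,
    Finsupp.update_apply, if_pos rfl, rows]
  congr 1
  refine Multiset.map_congr rfl fun s hs => ?_
  have hsr : s ≠ r := fun h => Finsupp.mem_support_iff.mp hs (h ▸ hr)
  rw [Finsupp.update_apply, if_neg hsr]

lemma isProper_update {Y : ℕ →₀ ℕ} (hY : IsProper n Y) {r N : ℕ} (hr : Y r = 0)
    (hbelow : ∀ s < r, s % (n+1) = r % (n+1) → Y s ≠ 0)
    (hN : ∀ s, Y s ≠ 0 → N ≤ Y s) :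
    IsProper n (Y.update r N) := by
  intro s s' hss' hmod
  simp only [Finsupp.update_apply]
  split_ifs with hs' hs hs
  · exact le_rfl
  · exact hN s (hbelow s (by omega) (hs' ▸ hmod))
  · have := hY r s' (hs ▸ hss') (hs ▸ hmod)
    omega
  · exact hY s s' hss' hmod

lemma exists_resFin_eq_apply_eq_zero (Y : ℕ →₀ ℕ) (j : Fin (n+1)) :
    ∃ r, resFin n r = j ∧ Y r = 0 := by
  set K := Y.support.sup id + 1
  refine ⟨j + n + (n+1) * K, Fin.ext ?_, Finsupp.notMem_support_iff.mp fun hmem => ?_⟩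
  · change (j + n + (n+1) * K + 1) % (n+1) = j
    rw [show j + n + (n+1) * K + 1 = j + (n+1) * (K+1) by ring, Nat.add_mul_mod_self_left,
      Nat.mod_eq_of_lt j.isLt]
  · have hle : j + n + (n+1) * K ≤ Y.support.sup id := Finset.le_sup (f := id) hmem
    have : K ≤ (n+1) * K := Nat.le_mul_of_pos_left K (Nat.succ_pos n)
    omega

lemma exists_isProper_rows_eq (P : Multiset (Fin (n+1) × ℕ)) (hP : ∀ p ∈ P, 0 < p.2) :
    ∃ Y, IsProper n Y ∧ rows n Y = P := by
  classical
  induction hcard : Multiset.card P generalizing P with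
  | zero => exact ⟨0, fun _ _ _ _ => le_rfl, by simp [rows, Multiset.card_eq_zero.mp hcard]⟩
  | succ m ih =>
    -- Put a shortest part into the lowest empty row of its class.
    obtain ⟨x, hxP, hxmin⟩ := P.toFinset.exists_min_image Prod.snd
      (Multiset.toFinset_nonempty.mpr (Multiset.card_pos.mp (by omega)))
    rw [Multiset.mem_toFinset] at hxP
    obtain ⟨Y, hY, hrows⟩ := ih (P.erase x) (fun p hp => hP p (Multiset.mem_of_mem_erase hp))
      (by rw [Multiset.card_erase_of_mem hxP, hcard, Nat.pred_succ])
    have hex := exists_resFin_eq_apply_eq_zero Y x.1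
    obtain ⟨hres, hr⟩ := Nat.find_spec hex
    have hbelow : ∀ s < Nat.find hex, s % (n+1) = Nat.find hex % (n+1) → Y s ≠ 0 :=
      fun s hs hmod hYs => Nat.find_min hex hs ⟨(resFin_eq_resFin_iff.mpr hmod).trans hres, hYs⟩
    have hN : ∀ s, Y s ≠ 0 → x.2 ≤ Y s := fun s hs => by
      have hmem : (resFin n s, Y s) ∈ rows n Y :=
        (mem_rows_iff (Nat.pos_of_ne_zero hs)).mpr ⟨s, rfl, rfl⟩
      rw [hrows] at hmem
      exact hxmin _ (Multiset.mem_toFinset.mpr (Multiset.mem_of_mem_erase hmem))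
    refine ⟨Y.update (Nat.find hex) x.2, isProper_update hY hr hbelow hN, ?_⟩
    rw [rows_update hr (hP x hxP).ne', hrows, hres, Multiset.cons_erase hxP]

end YoungWall

theorem Psi_bijection_general (n : ℕ) :
    Set.BijOn (PsiMap n) {Y | IsYinf n Y} {e | IsKinf n e} := by
  refine ⟨fun Y hY => ?_, fun Y hY Y' hY' h => ?_, fun e he => ?_⟩
  · exact ⟨fun _ => validGen_of_mem_psiMap, fun h => hY.2 (hasRemovableDelta_iff_psiMap.mpr h)⟩
  · refine eq_of_rows_eq hY.1 hY'.1 ?_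
    rw [← map_rowOfGen_psiMap, h, map_rowOfGen_psiMap]
  · obtain ⟨Y, hY, hrows⟩ := exists_isProper_rows_eq (e.map (rowOfGen n)) fun p hp => by
      obtain ⟨g, hg, rfl⟩ := Multiset.mem_map.mp hp
      exact rowOfGen_snd_pos (he.1 g hg)
    have hPsi : PsiMap n Y = e := by
      rw [psiMap_eq_map_rows, hrows, Multiset.map_map]
      exact (Multiset.map_congr rfl fun g hg => genOfRow_rowOfGen (he.1 g hg)).trans
        (Multiset.map_id e)
    exact ⟨Y, ⟨hY, fun h => he.2 (hPsi ▸ hasRemovableDelta_iff_psiMap.mp h)⟩, hPsi⟩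

/-- Proposition 3.12: the map Ψ, sending each row of a reduced proper generalized Young
wall to the prescribed Kostant partition part (rows of length (n+1)k in positions
≡ j mod n+1, 1 ≤ j ≤ n, to (kδ_j); rows of length (n+1)k+ℓ there to (kδ + α_{j-1}^(ℓ));
rows in positions ≡ 0 of length (n+1)k to δ^(k) and of length (n+1)k+ℓ to
(kδ + α_n^(ℓ))), is a bijection from Y(∞) onto K(∞) (its inverse Φ forms for each part
a row of the prescribed length in the prescribed residue class, arranged weakly
decreasingly within each class). -/
theorem Psi_bijection (n : ℕ) (hn : 1 ≤ n) :
    Set.BijOn (PsiMap n) {Y | IsYinf n Y} {e | IsKinf n e} :=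
  Psi_bijection_general n
end

section
/- For any reduced proper generalized Young wall Y of type A_n^(1), the number of distinct parts of the Kostant partition (φ∘Ψ)(Y) equals N(Y) := n·P(Y) + Σ_{j=1}^{n+1} #(S_j(Y) \ Q(Y)), where P(Y) = Σ_{t ≥ 1, (n+1)∤t} max{p_m : q_m = t, m ≥ 0} and Q(Y) = (∪_{m≥0} {(n+1)^s q_m : 0 ≤ s ≤ p_m - 1}) ∪ {0}, with N_{(n+1)(m+1)}(Y) = (n+1)^{p_m} q_m, (n+1) ∤ q_m (and (p_m,q_m) = (0,0) if the row is empty). -/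
/-- S_j(Y) \ {0}: the set of distinct nonzero lengths of rows in positions ≡ j mod n+1. -/
def Sj (n : ℕ) (Y : ℕ →₀ ℕ) (j : ℕ) : Finset ℕ :=
  ((Y.support.filter (fun r => (r+1) % (n+1) = j % (n+1))).image Y).erase 0

/-- p with N = (n+1)^p q, (n+1) ∤ q (for N > 0); gives 0 for N = 0. -/
def pval (n N : ℕ) : ℕ := Nat.findGreatest (fun p => (n+1)^p ∣ N) N

def qval (n N : ℕ) : ℕ := N / (n+1)^(pval n N)

def Qset (n : ℕ) (Y : ℕ →₀ ℕ) : Finset ℕ :=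
  insert 0 ((Y.support.filter (fun r => (r+1) % (n+1) = 0)).biUnion
    (fun r => (Finset.range (pval n (Y r))).image (fun s => (n+1)^s * qval n (Y r))))

def Pstat (n : ℕ) (Y : ℕ →₀ ℕ) : ℕ :=
  ∑ t ∈ ((Y.support.filter (fun r => (r+1) % (n+1) = 0)).image (fun r => qval n (Y r))).erase 0,
    (Y.support.filter (fun r => (r+1) % (n+1) = 0 ∧ qval n (Y r) = t)).sup
      (fun r => pval n (Y r))

/-!
Every part of `φ (Ψ Y)` other than a symbol `δ^(m)` is determined by its colour `c ∈ {0, …, n}`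
and its height `N`. A row of length `N` in a position `≡ i+1` (`i < n`) gives the part of colour `i`
and height `N`. A row of length `N = (n+1)^p q` in a position `≡ 0` gives `δ^(N/(n+1))`, which
unfolds into the parts of colour `n` and height `q` and of every colour `i < n` and height
`(n+1)^s q` with `s < p`. Hence the distinct parts of colour `i < n` are indexed by
`S_{i+1} ∪ Q'`, where `Q' = Q(Y) \ {0}` has `P(Y)` elements, and those of colour `n` by the values
of `q` on `S_{n+1}`. Each such value is attained by exactly one element of `S_{n+1} \ Q'`, namely
the largest element of `S_{n+1}` with that `q`.
-/

variable {n : ℕ}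

lemma pow_pval_dvd (N : ℕ) : (n+1)^pval n N ∣ N := by
  by_cases h : pval n N = 0
  · simp [h]
  · exact Nat.findGreatest_of_ne_zero (P := fun p => (n+1)^p ∣ N) (n := N) rfl h

lemma pow_pval_mul_qval (N : ℕ) : (n+1)^pval n N * qval n N = N :=
  Nat.mul_div_cancel' (pow_pval_dvd N)

lemma not_dvd_qval (hn : 1 ≤ n) {N : ℕ} (hN : N ≠ 0) : ¬ (n+1) ∣ qval n N := by
  rintro ⟨c, hc⟩
  have hdvd : (n+1)^(pval n N + 1) ∣ N := by
    refine ⟨c, ?_⟩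
    rw [pow_succ, mul_assoc, ← hc, pow_pval_mul_qval]
  have hle : pval n N + 1 ≤ N :=
    ((Nat.lt_pow_self (by omega)).trans_le (Nat.le_of_dvd (Nat.pos_of_ne_zero hN) hdvd)).le
  exact Nat.findGreatest_is_greatest (Nat.lt_succ_self _) hle hdvd

lemma qval_ne_zero {N : ℕ} (hN : N ≠ 0) : qval n N ≠ 0 := by
  rintro h
  exact hN (by rw [← pow_pval_mul_qval (n := n) N, h, mul_zero])

lemma pval_pow_mul (hn : 1 ≤ n) {p q : ℕ} (hq : ¬ (n+1) ∣ q) : pval n ((n+1)^p * q) = p := by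
  have hq0 : q ≠ 0 := by rintro rfl; exact hq (dvd_zero _)
  apply le_antisymm
  · by_contra! hlt
    have : (n+1)^(p+1) ∣ (n+1)^p * q :=
      (pow_dvd_pow _ hlt).trans (pow_pval_dvd _)
    rw [pow_succ] at this
    exact hq (Nat.dvd_of_mul_dvd_mul_left (by positivity) this)
  · refine Nat.le_findGreatest ?_ (dvd_mul_right _ _)
    exact (Nat.lt_pow_self (by omega)).le.trans (Nat.le_mul_of_pos_right _ (Nat.pos_of_ne_zero hq0))

lemma qval_pow_mul (hn : 1 ≤ n) {p q : ℕ} (hq : ¬ (n+1) ∣ q) : qval n ((n+1)^p * q) = q := by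
  rw [qval, pval_pow_mul hn hq, Nat.mul_div_cancel_left _ (by positivity)]

lemma pval_of_not_dvd (hn : 1 ≤ n) {N : ℕ} (h : ¬ (n+1) ∣ N) : pval n N = 0 := by
  simpa using pval_pow_mul hn (p := 0) h

lemma qval_of_not_dvd (hn : 1 ≤ n) {N : ℕ} (h : ¬ (n+1) ∣ N) : qval n N = N := by
  simpa using qval_pow_mul hn (p := 0) h

lemma base_mul_eq_pow_pval_succ_mul_qval (N : ℕ) :
    (n+1) * N = (n+1)^(pval n N + 1) * qval n N := by
  rw [pow_succ, mul_comm _ (n+1), mul_assoc, pow_pval_mul_qval]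

lemma pval_base_mul (hn : 1 ≤ n) {N : ℕ} (hN : N ≠ 0) : pval n ((n+1) * N) = pval n N + 1 := by
  rw [base_mul_eq_pow_pval_succ_mul_qval, pval_pow_mul hn (not_dvd_qval hn hN)]

lemma qval_base_mul (hn : 1 ≤ n) {N : ℕ} (hN : N ≠ 0) : qval n ((n+1) * N) = qval n N := by
  rw [base_mul_eq_pow_pval_succ_mul_qval, qval_pow_mul hn (not_dvd_qval hn hN)]


section PowQuotients

/-- The numbers `N / (n+1)^k` for `1 ≤ k ≤ pval n N`, i.e. the piece of `Qset` contributed by a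
row of length `N`. -/
def powQuotients (n N : ℕ) : Finset ℕ :=
  (Finset.range (pval n N)).image (fun s => (n+1)^s * qval n N)

lemma mem_powQuotients (hn : 1 ≤ n) {M N : ℕ} (hN : N ≠ 0) :
    M ∈ powQuotients n N ↔ qval n M = qval n N ∧ pval n M < pval n N := by
  have hq := not_dvd_qval hn hN
  simp only [powQuotients, Finset.mem_image, Finset.mem_range]
  constructor
  · rintro ⟨s, hs, rfl⟩
    exact ⟨qval_pow_mul hn hq, by rwa [pval_pow_mul hn hq]⟩
  · rintro ⟨hqM, hpM⟩
    exact ⟨pval n M, hpM, by rw [← hqM, pow_pval_mul_qval]⟩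

lemma eq_of_pval_eq_of_qval_eq {M N : ℕ} (hp : pval n M = pval n N) (hq : qval n M = qval n N) :
    M = N := by
  rw [← pow_pval_mul_qval (n := n) M, ← pow_pval_mul_qval (n := n) N, hp, hq]

lemma lt_of_pval_lt_of_qval_eq (hn : 1 ≤ n) {M N : ℕ} (hN : N ≠ 0) (hp : pval n M < pval n N)
    (hq : qval n M = qval n N) : M < N := by
  rw [← pow_pval_mul_qval (n := n) M, ← pow_pval_mul_qval (n := n) N, hq]
  exact Nat.mul_lt_mul_of_pos_right (Nat.pow_lt_pow_right (by omega) hp)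
    (Nat.pos_of_ne_zero (qval_ne_zero hN))

variable {V : Finset ℕ}

lemma card_image_qval (hn : 1 ≤ n) (hV : 0 ∉ V) :
    (V.image (qval n)).card = (V \ V.biUnion (powQuotients n)).card := by
  have hV' : ∀ N ∈ V, N ≠ 0 := fun N hN h => hV (h ▸ hN)
  have not_mem : ∀ {M N}, M ∈ V \ V.biUnion (powQuotients n) → N ∈ V →
      qval n M = qval n N → ¬ pval n M < pval n N := fun hM hN hq hp =>
    (Finset.mem_sdiff.mp hM).2 <| Finset.mem_biUnion.mpr
      ⟨_, hN, (mem_powQuotients hn (hV' _ hN)).mpr ⟨hq, hp⟩⟩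
  symm
  apply Finset.card_nbij (qval n)
  · intro M hM
    exact Finset.mem_image_of_mem _ (Finset.mem_sdiff.mp hM).1
  · intro M hM N hN hq
    refine eq_of_pval_eq_of_qval_eq (le_antisymm ?_ ?_) hq
    · exact not_lt.mp (not_mem hN (Finset.mem_sdiff.mp hM).1 hq.symm)
    · exact not_lt.mp (not_mem hM (Finset.mem_sdiff.mp hN).1 hq)
  · rintro t ht
    obtain ⟨N, hN, rfl⟩ := Finset.mem_image.mp (Finset.mem_coe.mp ht)
    obtain ⟨M, hM, hmax⟩ := Finset.exists_max_image (V.filter (qval n · = qval n N)) id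
      ⟨N, Finset.mem_filter.mpr ⟨hN, rfl⟩⟩
    obtain ⟨hMV, hMq⟩ := Finset.mem_filter.mp hM
    refine ⟨M, Finset.mem_sdiff.mpr ⟨hMV, fun hQ => ?_⟩, hMq⟩
    obtain ⟨K, hK, hMK⟩ := Finset.mem_biUnion.mp hQ
    obtain ⟨hqMK, hpMK⟩ := (mem_powQuotients hn (hV' K hK)).mp hMK
    have hKM := hmax K (Finset.mem_filter.mpr ⟨hK, hqMK ▸ hMq⟩)
    exact absurd hKM (not_le.mpr (lt_of_pval_lt_of_qval_eq hn (hV' K hK) hpMK hqMK))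

lemma card_biUnion_powQuotients (hn : 1 ≤ n) (hV : 0 ∉ V) :
    (V.biUnion (powQuotients n)).card
      = ∑ t ∈ V.image (qval n), (V.filter (qval n · = t)).sup (pval n) := by
  have hV' : ∀ N ∈ V, N ≠ 0 := fun N hN h => hV (h ▸ hN)
  have mem_iff : ∀ M, M ∈ V.biUnion (powQuotients n) ↔
      ∃ N ∈ V, qval n M = qval n N ∧ pval n M < pval n N := fun M => by
    simp only [Finset.mem_biUnion]
    exact exists_congr fun N => and_congr_right fun hN => mem_powQuotients hn (hV' N hN)
  rw [Finset.card_eq_sum_card_fiberwise (f := qval n) (t := V.image (qval n))]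
  · refine Finset.sum_congr rfl fun t ht => ?_
    obtain ⟨N₀, hN₀, rfl⟩ := Finset.mem_image.mp ht
    have hq := not_dvd_qval hn (hV' N₀ hN₀)
    have hfiber : (V.biUnion (powQuotients n)).filter (qval n · = qval n N₀)
        = (Finset.range ((V.filter (qval n · = qval n N₀)).sup (pval n))).image
            (fun s => (n+1)^s * qval n N₀) := by
      ext M
      simp only [Finset.mem_filter, mem_iff, Finset.mem_image, Finset.mem_range,
        Finset.lt_sup_iff]
      constructor
      · rintro ⟨⟨N, hN, hqM, hpM⟩, hM⟩
        exact ⟨pval n M, ⟨N, ⟨hN, hqM ▸ hM⟩, hpM⟩, by rw [← hM, pow_pval_mul_qval]⟩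
      · rintro ⟨s, ⟨N, ⟨hN, hqN⟩, hs⟩, rfl⟩
        rw [qval_pow_mul hn hq, pval_pow_mul hn hq]
        exact ⟨⟨N, hN, hqN.symm, hs⟩, rfl⟩
    rw [hfiber, Finset.card_image_of_injective, Finset.card_range]
    intro a b hab
    exact Nat.pow_right_injective (by omega)
      (Nat.eq_of_mul_eq_mul_right (Nat.pos_of_ne_zero (qval_ne_zero (hV' N₀ hN₀))) hab)
  · intro M hM
    obtain ⟨N, hN, hqM, -⟩ := (mem_iff M).mp hM
    exact Finset.mem_image.mpr ⟨N, hN, hqM.symm⟩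

end PowQuotients

namespace Gen

def color : Gen n → ℕ
  | imag i _ => i
  | real _ i _ => i
  | dsym _ => n+1

def height : Gen n → ℕ
  | imag _ m => (n+1) * m
  | real c _ ℓ => (n+1) * c + ℓ
  | dsym _ => 0

def realPart (i : Fin (n+1)) (N : ℕ) : Gen n :=
  Gen.real (N/(n+1)) i (N%(n+1))

/-- The part that `φ ∘ Ψ` assigns to a row of length `N` in a position `≡ i+1 mod n+1`. -/
def colorPart (i : Fin n) (N : ℕ) : Gen n :=
  if (n+1) ∣ N then imag i (N/(n+1)) else realPart i.castSucc N

@[simp] lemma color_realPart (i : Fin (n+1)) (N : ℕ) : (realPart i N).color = i := rfl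

@[simp] lemma height_realPart (i : Fin (n+1)) (N : ℕ) : (realPart i N).height = N :=
  Nat.div_add_mod N (n+1)

@[simp] lemma color_colorPart (i : Fin n) (N : ℕ) : (colorPart i N).color = i := by
  unfold colorPart; split_ifs <;> rfl

@[simp] lemma height_colorPart (i : Fin n) (N : ℕ) : (colorPart i N).height = N := by
  unfold colorPart; split_ifs with h
  · exact Nat.mul_div_cancel' h
  · exact height_realPart _ _

lemma colorPart_inj {i j : Fin n} {N M : ℕ} :
    colorPart i N = colorPart j M ↔ i = j ∧ N = M := by
  refine ⟨fun h => ⟨Fin.ext ?_, ?_⟩, fun ⟨hij, hNM⟩ => hij ▸ hNM ▸ rfl⟩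
  · simpa using congrArg color h
  · simpa using congrArg height h

lemma realPart_injective (i : Fin (n+1)) : Function.Injective (realPart i) :=
  fun N M h => by simpa using congrArg height h

lemma colorPart_ne_realPart_last (i : Fin n) (N M : ℕ) :
    colorPart i N ≠ realPart (Fin.last n) M := fun h => by
  have := congrArg color h
  simp only [color_colorPart, color_realPart, Fin.val_last] at this
  exact i.isLt.ne this

lemma colorPart_of_not_dvd {i : Fin n} {N : ℕ} (h : ¬ (n+1) ∣ N) :
    colorPart i N = realPart i.castSucc N := if_neg h

lemma colorPart_base_mul (i : Fin n) (m : ℕ) : colorPart i ((n+1) * m) = imag i m := by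
  rw [colorPart, if_pos (dvd_mul_right _ _), Nat.mul_div_cancel_left _ (Nat.succ_pos n)]

end Gen

open Gen

lemma mem_unfoldDelta (hn : 1 ≤ n) {m : ℕ} (hm : m ≠ 0) {g : Gen n} :
    g ∈ unfoldDelta n m ↔ g = realPart (Fin.last n) (qval n m) ∨
      ∃ i : Fin n, ∃ s ≤ pval n m, g = colorPart i ((n+1)^s * qval n m) := by
  induction m using Nat.strong_induction_on with
  | _ m IH =>
  obtain ⟨m, rfl⟩ : ∃ k, m = k + 1 := ⟨m - 1, by omega⟩
  rw [unfoldDelta, dif_neg (by omega)]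
  split_ifs with hd
  · obtain ⟨k, hk⟩ := Nat.dvd_of_mod_eq_zero hd
    have hk0 : k ≠ 0 := by rintro rfl; simp at hk
    have hdiv : (m+1) / (n+1) = k := by rw [hk, Nat.mul_div_cancel_left _ (Nat.succ_pos n)]
    have hlt : k < m + 1 := by rw [← hdiv]; exact Nat.div_lt_self (by omega) (by omega)
    rw [hdiv, Multiset.mem_add, IH k hlt hk0, hk, pval_base_mul hn hk0, qval_base_mul hn hk0]
    simp only [Multiset.mem_map, Finset.mem_val, Finset.mem_univ, true_and,
      ← colorPart_base_mul, base_mul_eq_pow_pval_succ_mul_qval, Nat.le_succ_iff]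
    constructor
    · rintro ((h | ⟨i, s, hs, rfl⟩) | ⟨i, rfl⟩)
      · exact Or.inl h
      · exact Or.inr ⟨i, s, Or.inl hs, rfl⟩
      · exact Or.inr ⟨i, _, Or.inr rfl, rfl⟩
    · rintro (h | ⟨i, s, hs | rfl, rfl⟩)
      · exact Or.inl (Or.inl h)
      · exact Or.inl (Or.inr ⟨i, s, hs, rfl⟩)
      · exact Or.inr ⟨i, rfl⟩
  · have hnd : ¬ (n+1) ∣ m+1 := fun h => hd (Nat.mod_eq_zero_of_dvd h)
    simp only [pval_of_not_dvd hn hnd, qval_of_not_dvd hn hnd, Nat.le_zero, exists_eq_left,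
      pow_zero, one_mul, colorPart_of_not_dvd hnd, Multiset.mem_map, Finset.mem_val,
      Finset.mem_univ, true_and]
    rw [Fin.exists_fin_succ', or_comm]
    simp only [Gen.realPart, eq_comm]


lemma unfoldExpr_rowPart_of_ne_zero {j : Fin (n+1)} (hj : j.val ≠ 0) {N : ℕ} (hN : N ≠ 0) :
    unfoldExpr n (rowPart n j N) = {colorPart ⟨j.val - 1, by omega⟩ N} := by
  rw [rowPart, if_neg hN, dif_neg hj, colorPart]
  by_cases hd : (n+1) ∣ N
  · rw [if_pos (Nat.mod_eq_zero_of_dvd hd), if_pos hd]; rfl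
  · rw [if_neg (mt Nat.dvd_of_mod_eq_zero hd), if_neg hd]; rfl

lemma mem_unfoldExpr_rowPart_of_eq_zero (hn : 1 ≤ n) {j : Fin (n+1)} (hj : j.val = 0) {N : ℕ}
    (hN : N ≠ 0) {g : Gen n} :
    g ∈ unfoldExpr n (rowPart n j N) ↔ g = realPart (Fin.last n) (qval n N) ∨
      ∃ i : Fin n, ∃ M ∈ powQuotients n N, g = colorPart i M := by
  rw [rowPart, if_neg hN, dif_pos hj]
  split_ifs with hd
  · obtain ⟨k, rfl⟩ := Nat.dvd_of_mod_eq_zero hd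
    have hk0 : k ≠ 0 := by rintro rfl; simp at hN
    simp only [unfoldExpr, Multiset.singleton_bind, Nat.mul_div_cancel_left _ (Nat.succ_pos n),
      mem_unfoldDelta hn hk0, powQuotients, pval_base_mul hn hk0, qval_base_mul hn hk0,
      Finset.mem_image, Finset.mem_range, Nat.lt_succ_iff]
    refine or_congr_right ⟨?_, ?_⟩
    · rintro ⟨i, s, hs, rfl⟩
      exact ⟨i, _, ⟨s, hs, rfl⟩, rfl⟩
    · rintro ⟨i, _, ⟨s, hs, rfl⟩, rfl⟩
      exact ⟨i, s, hs, rfl⟩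
  · have hnd : ¬ (n+1) ∣ N := fun h => hd (Nat.mod_eq_zero_of_dvd h)
    simp [unfoldExpr, powQuotients, pval_of_not_dvd hn hnd, qval_of_not_dvd hn hnd, Gen.realPart]

lemma mem_unfoldExpr_PsiMap {Y : ℕ →₀ ℕ} {g : Gen n} :
    g ∈ unfoldExpr n (PsiMap n Y) ↔
      ∃ r ∈ Y.support, g ∈ unfoldExpr n (rowPart n (resFin n r) (Y r)) := by
  rw [PsiMap, unfoldExpr, Multiset.bind_assoc, Multiset.mem_bind]
  rfl


section Wall

variable {Y : ℕ →₀ ℕ}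

lemma mem_Sj {j v : ℕ} :
    v ∈ Sj n Y j ↔ ∃ r ∈ Y.support, (r+1) % (n+1) = j % (n+1) ∧ Y r = v := by
  simp only [Sj, Finset.mem_erase, Finset.mem_image, Finset.mem_filter, and_assoc]
  refine ⟨fun ⟨_, h⟩ => h, fun h => ⟨?_, h⟩⟩
  obtain ⟨r, hr, -, rfl⟩ := h
  exact Finsupp.mem_support_iff.mp hr

lemma zero_notMem_Sj (j : ℕ) : 0 ∉ Sj n Y j :=
  Finset.notMem_erase 0 _

lemma Sj_last : Sj n Y (n+1) = (Y.support.filter (fun r => (r+1) % (n+1) = 0)).image Y := by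
  rw [Sj, Nat.mod_self, Finset.erase_eq_of_notMem]
  simp only [Finset.mem_image, Finset.mem_filter]
  rintro ⟨r, ⟨hr, -⟩, h⟩
  exact Finsupp.mem_support_iff.mp hr h

/-- `Q(Y) \ {0}`. -/
def Qpos (n : ℕ) (Y : ℕ →₀ ℕ) : Finset ℕ := (Sj n Y (n+1)).biUnion (powQuotients n)

lemma Qset_eq_insert_Qpos : Qset n Y = insert 0 (Qpos n Y) := by
  rw [Qpos, Sj_last, Finset.image_biUnion]
  rfl

lemma Sj_sdiff_Qset (j : ℕ) : Sj n Y j \ Qset n Y = Sj n Y j \ Qpos n Y := by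
  rw [Qset_eq_insert_Qpos, Finset.sdiff_insert_of_notMem (zero_notMem_Sj j)]

lemma Pstat_eq_sum_sup : Pstat n Y = ∑ t ∈ (Sj n Y (n+1)).image (qval n),
    ((Sj n Y (n+1)).filter (qval n · = t)).sup (pval n) := by
  have hq : 0 ∉ (Sj n Y (n+1)).image (qval n) := by
    simp only [Finset.mem_image, not_exists, not_and]
    exact fun N hN => qval_ne_zero (fun h => zero_notMem_Sj _ (h ▸ hN))
  rw [← Finset.erase_eq_of_notMem hq, Sj_last, Finset.image_image, Pstat]
  refine Finset.sum_congr rfl fun t _ => ?_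
  rw [Finset.filter_image, Finset.sup_image, Finset.filter_filter]
  rfl

lemma card_Qpos (hn : 1 ≤ n) : (Qpos n Y).card = Pstat n Y := by
  rw [Qpos, card_biUnion_powQuotients hn (zero_notMem_Sj _), Pstat_eq_sum_sup]

/-- The distinct parts of `φ (Ψ Y)`: rows in positions `≡ i+1` and the unfolded `δ`'s of rows in
positions `≡ 0` give the parts `colorPart i`, and the latter also the parts of colour `n`. -/
def partsFinset (n : ℕ) (Y : ℕ →₀ ℕ) : Finset (Gen n) :=
  (Finset.univ.biUnion fun i : Fin n => (Sj n Y (i+1) ∪ Qpos n Y).image (colorPart i)) ∪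
    ((Sj n Y (n+1)).image (qval n)).image (realPart (Fin.last n))

lemma toFinset_unfoldExpr_PsiMap (hn : 1 ≤ n) :
    (unfoldExpr n (PsiMap n Y)).toFinset = partsFinset n Y := by
  have hres : ∀ {r}, (resFin n r).val = (r+1) % (n+1) := rfl
  have hsucc : ∀ i : Fin n, (i.val + 1) % (n+1) = i.val + 1 :=
    fun i => Nat.mod_eq_of_lt (by omega)
  ext g
  simp only [Multiset.mem_toFinset, mem_unfoldExpr_PsiMap, partsFinset, Qpos, Finset.mem_union,
    Finset.mem_biUnion, Finset.mem_image, Finset.mem_univ, true_and, mem_Sj, Nat.mod_self]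
  constructor
  · rintro ⟨r, hr, hg⟩
    have hY0 := Finsupp.mem_support_iff.mp hr
    by_cases hj : (r+1) % (n+1) = 0
    · rcases (mem_unfoldExpr_rowPart_of_eq_zero hn hj hY0).mp hg with rfl | ⟨i, M, hM, rfl⟩
      · exact Or.inr ⟨_, ⟨Y r, ⟨r, hr, hj, rfl⟩, rfl⟩, rfl⟩
      · exact Or.inl ⟨i, M, Or.inr ⟨Y r, ⟨r, hr, hj, rfl⟩, hM⟩, rfl⟩
    · rw [unfoldExpr_rowPart_of_ne_zero hj hY0, Multiset.mem_singleton] at hg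
      have := Nat.mod_lt (r+1) (show 0 < n+1 by omega)
      refine Or.inl ⟨⟨(r+1) % (n+1) - 1, by omega⟩, Y r, Or.inl ⟨r, hr, ?_, rfl⟩, hg.symm⟩
      rw [hsucc]
      dsimp only
      omega
  · rintro (⟨i, v, ⟨r, hr, hri, rfl⟩ | ⟨N, ⟨r, hr, hr0, rfl⟩, hM⟩, rfl⟩ |
      ⟨t, ⟨N, ⟨r, hr, hr0, rfl⟩, rfl⟩, rfl⟩)
    · rw [hsucc] at hri
      refine ⟨r, hr, ?_⟩
      rw [unfoldExpr_rowPart_of_ne_zero (by rw [hres]; omega) (Finsupp.mem_support_iff.mp hr)]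
      simp only [Multiset.mem_singleton, colorPart_inj, and_true]
      exact Fin.ext (by simp only [hres, hri]; omega)
    · exact ⟨r, hr, (mem_unfoldExpr_rowPart_of_eq_zero hn hr0 (Finsupp.mem_support_iff.mp hr)).mpr
        (Or.inr ⟨i, _, hM, rfl⟩)⟩
    · exact ⟨r, hr, (mem_unfoldExpr_rowPart_of_eq_zero hn hr0 (Finsupp.mem_support_iff.mp hr)).mpr
        (Or.inl rfl)⟩

lemma card_partsFinset : (partsFinset n Y).card
    = ∑ i : Fin n, (Sj n Y (i+1) ∪ Qpos n Y).card + ((Sj n Y (n+1)).image (qval n)).card := by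
  rw [partsFinset, Finset.card_union_of_disjoint, Finset.card_biUnion,
    Finset.card_image_of_injective _ (realPart_injective _)]
  · congr 1
    refine Finset.sum_congr rfl fun i _ => Finset.card_image_of_injective _ fun N M h => ?_
    exact (colorPart_inj.mp h).2
  · intro i _ j _ hij
    simp only [Finset.disjoint_left, Finset.mem_image]
    rintro g ⟨N, -, rfl⟩ ⟨M, -, h⟩
    exact hij (colorPart_inj.mp h).1.symm
  · simp only [Finset.disjoint_left, Finset.mem_biUnion, Finset.mem_image]
    rintro g ⟨i, -, N, -, rfl⟩ ⟨M, -, h⟩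
    exact colorPart_ne_realPart_last i N M h.symm

end Wall

lemma sum_Icc_one_succ {M : Type*} [AddCommMonoid M] (f : ℕ → M) (m : ℕ) :
    ∑ j ∈ Finset.Icc 1 (m+1), f j = ∑ i : Fin m, f (i+1) + f (m+1) := by
  rw [Finset.sum_Icc_succ_top (by omega), ← Finset.Ico_add_one_right_eq_Icc,
    Finset.sum_Ico_eq_sum_range, Fin.sum_univ_eq_sum_range (fun i => f (i+1))]
  simp only [add_tsub_cancel_right, add_comm 1]

theorem distinct_parts_eq_N_general (n : ℕ) (hn : 1 ≤ n) (Y : ℕ →₀ ℕ) :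
    (unfoldExpr n (PsiMap n Y)).toFinset.card
      = n * Pstat n Y + ∑ j ∈ Finset.Icc 1 (n+1), ((Sj n Y j) \ Qset n Y).card := by
  have hcolor : ∀ i : Fin n,
      (Sj n Y (i+1) ∪ Qpos n Y).card = (Sj n Y (i+1) \ Qpos n Y).card + Pstat n Y := fun i => by
    rw [← card_Qpos hn, Finset.card_sdiff_add_card]
  rw [toFinset_unfoldExpr_PsiMap hn, card_partsFinset, card_image_qval hn (zero_notMem_Sj _),
    Finset.sum_congr rfl fun i _ => hcolor i, Finset.sum_add_distrib, sum_Icc_one_succ]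
  simp only [Sj_sdiff_Qset, Finset.sum_const, Finset.card_univ, Fintype.card_fin, smul_eq_mul,
    Qpos]
  ring

/-- Proposition 3.13: for any reduced proper generalized Young wall Y of type A_n^(1),
the number of distinct parts of the Kostant partition (φ∘Ψ)(Y) equals
N(Y) = n·P(Y) + Σ_{j=1}^{n+1} #(S_j(Y) \ Q(Y)), where for each row of Y in a position
≡ 0 mod n+1 with N_{(n+1)(m+1)}(Y) = (n+1)^{p_m} q_m, (n+1) ∤ q_m (and (p_m,q_m)=(0,0)
for empty rows), Q(Y) = (∪_m {(n+1)^s q_m : 0 ≤ s ≤ p_m - 1}) ∪ {0} and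
P(Y) = Σ_{t≥1, (n+1)∤t} max{p_m : q_m = t}. -/
theorem distinct_parts_eq_N (n : ℕ) (hn : 1 ≤ n) (Y : ℕ →₀ ℕ) (hY : IsYinf n Y) :
    (unfoldExpr n (PsiMap n Y)).toFinset.card
      = n * Pstat n Y + ∑ j ∈ Finset.Icc 1 (n+1), ((Sj n Y j) \ Qset n Y).card :=
  distinct_parts_eq_N_general n hn Y
end

section
/- For each i ≥ 1, in the ring of formal power series in z with coefficients rational functions in q, the identity ∏_{j=1}^∞ (1 - q^{-i} z^j)/(1 - q^{-(i+1)} z^j) = Σ_{ρ ∈ P(1)} (1-q)^{N(ρ)} q^{-(i+1)M(ρ)} z^{|ρ|} holds, where for a partition ρ = (1^{m_1} 2^{m_2} ···): N(ρ) = #{r : m_r ≠ 0}, M(ρ) = m_1 + m_2 + ···, and |ρ| = m_1 + 2m_2 + 3m_3 + ···. -/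
/-!
With `b = q^{-(i+1)}`, the `j`-th factor is `(1 - b q z^j) / (1 - b z^j)
= 1 + ∑_{m ≥ 1} (1 - q) b^m z^{mj}`, a series supported on multiples of `j`. Expanding the
product over `1 ≤ j ≤ d`, the coefficient of `z^d` is a sum over tuples `(n_j)` with
`∑ n_j = d`; only tuples with `j ∣ n_j` for all `j` contribute, and these are exactly the
partitions of `d`, with `m_j = n_j / j` parts of size `j`. Such a partition contributes
`(1 - q) b^{m_j}` for each part size `j` it contains.
-/

open PowerSeries Finset

namespace Nat.Partition

theorem exists_toFinsuppAntidiag_eq {d : ℕ} {g : ℕ →₀ ℕ}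
    (hg : g ∈ (Icc 1 d).finsuppAntidiag d) (hdvd : ∀ j, j ∣ g j) :
    ∃ p : d.Partition, p.toFinsuppAntidiag = g := by
  let m : ℕ →₀ ℕ := Finsupp.onFinset g.support (fun j ↦ g j / j) fun j hj ↦ by
    simpa using fun h ↦ hj (by simp [h])
  have hsum : (Finsupp.toMultiset m).sum = d := by
    obtain ⟨hgd, hsupp⟩ := mem_finsuppAntidiag.mp hg
    rw [Finsupp.toMultiset_apply, ← Multiset.coe_sumAddMonoidHom, map_finsuppSum,
      Finsupp.onFinset_sum _ (by simp), ← hgd, ← sum_subset hsupp (by simp)]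
    refine sum_congr rfl fun j _ ↦ ?_
    rw [map_nsmul, Multiset.coe_sumAddMonoidHom, Multiset.sum_singleton, smul_eq_mul,
      Nat.div_mul_cancel (hdvd j)]
  refine ⟨ofSums d _ hsum, Finsupp.ext fun j ↦ ?_⟩
  show (ofSums d _ hsum).parts.count j * j = g j
  rcases eq_or_ne j 0 with rfl | hj
  · simpa [count_ofSums_zero] using (zero_dvd_iff.mp (hdvd 0)).symm
  · rw [count_ofSums_of_ne_zero _ hj, Finsupp.count_toMultiset, Finsupp.onFinset_apply,
      Nat.div_mul_cancel (hdvd j)]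

variable {R : Type*} [CommSemiring R]

theorem coeff_prod_Icc_eq_sum_partition (f : ℕ → R⟦X⟧)
    (hf : ∀ j ≠ 0, ∀ n, ¬ j ∣ n → coeff n (f j) = 0) (d : ℕ) :
    coeff d (∏ j ∈ Icc 1 d, f j) =
      ∑ p : d.Partition, ∏ j ∈ Icc 1 d, coeff (p.toFinsuppAntidiag j) (f j) := by
  rw [coeff_prod]
  refine (sum_of_injOn toFinsuppAntidiag (toFinsuppAntidiag_injective d).injOn
    (fun p _ ↦ p.toFinsuppAntidiag_mem_finsuppAntidiag) (fun g hg hg' ↦ ?_)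
    (fun _ _ ↦ rfl)).symm
  by_contra hne
  have hdvd (j : ℕ) : j ∣ g j := by
    by_cases hj : j ∈ Icc 1 d
    · by_contra h
      exact hne (prod_eq_zero hj (hf j (by grind) _ h))
    · rw [Finsupp.notMem_support_iff.mp fun h ↦ hj ((mem_finsuppAntidiag.mp hg).2 h)]
      exact dvd_zero j
  obtain ⟨p, rfl⟩ := exists_toFinsuppAntidiag_eq hg hdvd
  exact hg' ⟨p, mem_coe.mpr (mem_univ p), rfl⟩

theorem prod_coeff_toFinsuppAntidiag {d : ℕ} (p : d.Partition) (f : ℕ → R⟦X⟧)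
    (hf : ∀ j ≠ 0, constantCoeff (f j) = 1) :
    ∏ j ∈ Icc 1 d, coeff (p.toFinsuppAntidiag j) (f j) =
      ∏ j ∈ p.parts.toFinset, coeff (p.parts.count j * j) (f j) := by
  refine (prod_subset (fun j hj ↦ ?_) fun j hjd hj ↦ ?_).symm
  · exact (mem_finsuppAntidiag.mp p.toFinsuppAntidiag_mem_finsuppAntidiag).2 hj
  · rw [Finsupp.notMem_support_iff.mp hj, coeff_zero_eq_constantCoeff_apply, hf j (by grind)]

end Nat.Partition

section Factor

variable {k : Type*} [Field k]

theorem coeff_one_sub_C_mul_X_pow_mul_inv (b c : k) {j : ℕ} (hj : j ≠ 0) (n : ℕ) :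
    coeff n ((1 - C (b * c) * X ^ j) * (1 - C b * X ^ j)⁻¹) =
      if n = 0 then 1 else if j ∣ n then (1 - c) * b ^ (n / j) else 0 := by
  set F : k⟦X⟧ := mk fun n ↦ if n = 0 then 1 else if j ∣ n then (1 - c) * b ^ (n / j) else 0
  suffices h : F * (1 - C b * X ^ j) = 1 - C (b * c) * X ^ j by
    rw [← (eq_mul_inv_iff_mul_eq (by simp [hj])).mpr h, coeff_mk]
  ext n
  rw [mul_sub, mul_one, mul_left_comm, map_sub, map_sub, coeff_C_mul, coeff_C_mul_X_pow,
    coeff_one]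
  rcases lt_or_ge n j with hn | hn
  · rw [coeff_mul_X_pow', if_neg hn.not_ge, if_neg hn.ne]
    rcases eq_or_ne n 0 with rfl | hn0
    · simp [F]
    · simp [F, hn0, Nat.not_dvd_of_pos_of_lt (Nat.pos_of_ne_zero hn0) hn]
  · obtain ⟨m, rfl⟩ := Nat.exists_eq_add_of_le' hn
    rw [coeff_mul_X_pow]
    simp only [F, coeff_mk, Nat.dvd_add_self_right, Nat.add_div_right _ (Nat.pos_of_ne_zero hj),
      add_eq_zero, hj, and_false, if_false, add_eq_right]
    rcases eq_or_ne m 0 with rfl | hm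
    · simp only [dvd_zero, if_true, Nat.zero_div, zero_add, pow_one, mul_one, zero_sub]
      ring
    · by_cases hdvd : j ∣ m
      · simp only [hdvd, hm, if_true, if_false, pow_succ]
        ring
      · simp [hm, hdvd]

theorem coeff_mul_one_sub_C_mul_X_pow_mul_inv (b c : k) {j m : ℕ} (hj : j ≠ 0) (hm : m ≠ 0) :
    coeff (m * j) ((1 - C (b * c) * X ^ j) * (1 - C b * X ^ j)⁻¹) = (1 - c) * b ^ m := by
  rw [coeff_one_sub_C_mul_X_pow_mul_inv b c hj, if_neg (mul_ne_zero hm hj),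
    if_pos (dvd_mul_left j m), Nat.mul_div_cancel m (Nat.pos_of_ne_zero hj)]

end Factor

theorem correction_factor_single_general (i : ℕ) (d : ℕ) :
    PowerSeries.coeff d
      (∏ j ∈ Finset.Icc 1 d,
        ((1 - PowerSeries.C ((RatFunc.X (K := ℚ))⁻¹ ^ i) * (PowerSeries.X) ^ j) *
          (1 - PowerSeries.C ((RatFunc.X (K := ℚ))⁻¹ ^ (i+1)) * (PowerSeries.X) ^ j)⁻¹))
    = ∑ ρ : Nat.Partition d,
        (1 - RatFunc.X (K := ℚ)) ^ (ρ.parts.toFinset.card) *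
          ((RatFunc.X (K := ℚ))⁻¹) ^ ((i+1) * Multiset.card ρ.parts) := by
  set q : RatFunc ℚ := RatFunc.X
  have hq : q⁻¹ ^ i = q⁻¹ ^ (i + 1) * q := by
    rw [pow_succ, mul_assoc, inv_mul_cancel₀ RatFunc.X_ne_zero, mul_one]
  rw [hq, Nat.Partition.coeff_prod_Icc_eq_sum_partition _ fun j hj n hn ↦ by
    rw [coeff_one_sub_C_mul_X_pow_mul_inv _ _ hj, if_neg (by rintro rfl; exact hn (dvd_zero j)),
      if_neg hn]]
  refine sum_congr rfl fun p _ ↦ ?_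
  rw [Nat.Partition.prod_coeff_toFinsuppAntidiag p _ fun j hj ↦ by
    rw [← coeff_zero_eq_constantCoeff_apply, coeff_one_sub_C_mul_X_pow_mul_inv _ _ hj,
      if_pos rfl]]
  have hterm (j : ℕ) (hj : j ∈ p.parts.toFinset) :=
    have hj := Multiset.mem_toFinset.mp hj
    coeff_mul_one_sub_C_mul_X_pow_mul_inv (q⁻¹ ^ (i + 1)) q (p.parts_pos hj).ne'
      (Multiset.count_ne_zero.mpr hj)
  rw [prod_congr rfl hterm, prod_mul_distrib, prod_const, prod_pow_eq_pow_sum,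
    Multiset.toFinset_sum_count_eq, pow_mul]

/-- Proposition 4.3, single-factor version. For each i ≥ 1, in Q(q)[[z]],
∏_{j=1}^∞ (1 - q^{-i} z^j)/(1 - q^{-(i+1)} z^j)
  = Σ_{ρ ∈ P(1)} (1-q)^{N(ρ)} q^{-(i+1)M(ρ)} z^{|ρ|},
stated z-adically: for every degree d the coefficient of z^d of the product of the
factors with 1 ≤ j ≤ d (the factors with j > d do not affect this coefficient) equals
the sum over partitions ρ of d of (1-q)^{N(ρ)} q^{-(i+1)M(ρ)}, where N(ρ) is the number
of distinct part sizes of ρ and M(ρ) its number of parts. -/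
theorem correction_factor_single (i : ℕ) (hi : 1 ≤ i) (d : ℕ) :
    PowerSeries.coeff d
      (∏ j ∈ Finset.Icc 1 d,
        ((1 - PowerSeries.C ((RatFunc.X (K := ℚ))⁻¹ ^ i) * (PowerSeries.X) ^ j) *
          (1 - PowerSeries.C ((RatFunc.X (K := ℚ))⁻¹ ^ (i+1)) * (PowerSeries.X) ^ j)⁻¹))
    = ∑ ρ : Nat.Partition d,
        (1 - RatFunc.X (K := ℚ)) ^ (ρ.parts.toFinset.card) *
          ((RatFunc.X (K := ℚ))⁻¹) ^ ((i+1) * Multiset.card ρ.parts) :=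
  correction_factor_single_general i d
end

section
/- In the formal power series ring Q(q)[[z]], ∏_{i=1}^n ∏_{j=1}^∞ (1 - q^{-i} z^j)/(1 - q^{-(i+1)} z^j) = Σ_{ρ ∈ P(n)} (1-q)^{N(ρ)} q^{-M(ρ)} z^{|ρ|}, where for ρ = (ρ^(1),...,ρ^(n)): N(ρ) = Σ_{i=1}^n N(ρ^(i)) with N(ρ^(i)) the number of distinct part sizes of ρ^(i), M(ρ) = Σ_{i=1}^n (i+1)·(number of parts of ρ^(i)), and |ρ| = Σ_{i=1}^n |ρ^(i)|. -/
/-!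
Each factor is a series in `z^j`: with `b = q^{-(i+1)}`,
`(1 - q b z^j) / (1 - b z^j) = 1 + (1 - q) ∑_{c ≥ 1} b^c z^{jc}`.
Multiplying these out over `j`, a choice of exponents `c_j` with `∑ j c_j = m` is the partition
of `m` having `c_j` parts equal to `j`, and it contributes one factor `1 - q` per distinct part and
one factor `b` per part. Expanding the product over `i` then distributes the degree `d` over the
`n` components.
-/

open Finset PowerSeries

theorem Nat.Partition.exists_toFinsuppAntidiag_eq_s9 {s : Finset ℕ} (hs : 0 ∉ s) {m : ℕ}
    {l : ℕ →₀ ℕ} (hl : l ∈ s.finsuppAntidiag m) (hdvd : ∀ j ∈ s, j ∣ l j) :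
    ∃ p : m.Partition, p.toFinsuppAntidiag = l := by
  rw [mem_finsuppAntidiag] at hl
  obtain ⟨hsum, hsupp⟩ := hl
  have hzero : ∀ j ∉ s, l j = 0 := fun j hj => Finsupp.notMem_support_iff.1 (mt (@hsupp j) hj)
  let mult : ℕ →₀ ℕ := Finsupp.onFinset s (fun j => l j / j) fun j hj => by
    by_contra h
    simp [hzero j h] at hj
  have hmult : ∀ j, mult j * j = l j := by
    intro j
    by_cases hj : j ∈ s
    · exact Nat.div_mul_cancel (hdvd j hj)
    · simp [mult, hzero j hj]
  refine ⟨⟨Finsupp.toMultiset mult, fun {j} hj => ?_, ?_⟩, ?_⟩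
  · rw [Finsupp.mem_toMultiset] at hj
    exact Nat.pos_of_ne_zero (ne_of_mem_of_not_mem (Finsupp.support_onFinset_subset hj) hs)
  · rw [sum_multiset_count, Finsupp.toFinset_toMultiset]
    simp_rw [Finsupp.count_toMultiset, smul_eq_mul, hmult]
    rw [← hsum]
    exact sum_subset Finsupp.support_onFinset_subset fun j _ hj => by
      rw [← hmult, Finsupp.notMem_support_iff.1 hj, zero_mul]
  · ext j
    exact (congrArg (· * j) (Finsupp.count_toMultiset mult j)).trans (hmult j)

namespace PowerSeries

theorem coeff_prod_fin_eq_sum_antidiagonalTuple {R : Type*} [CommSemiring R] {n : ℕ}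
    (f : Fin n → R⟦X⟧) (d : ℕ) :
    coeff d (∏ i, f i) = ∑ c ∈ Nat.antidiagonalTuple n d, ∏ i, coeff (c i) (f i) := by
  classical
  rw [coeff_prod]
  refine sum_nbij' (fun l => ⇑l) Finsupp.equivFunOnFinite.symm (fun l hl => ?_) (fun c hc => ?_)
    (fun l _ => Finsupp.equivFunOnFinite_symm_coe l)
    (fun c _ => Finsupp.equivFunOnFinite.apply_symm_apply c) fun _ _ => rfl
  · rw [mem_finsuppAntidiag] at hl
    exact Nat.mem_antidiagonalTuple.2 hl.1
  · rw [Nat.mem_antidiagonalTuple] at hc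
    simpa [mem_finsuppAntidiag] using hc

section CommRing

variable {R : Type*} [CommRing R]

theorem coeff_prod_subst_X_pow_eq_sum_partitions (F : ℕ → R⟦X⟧)
    (hF : ∀ j, constantCoeff (F j) = 1) {m d : ℕ} (hmd : m ≤ d) :
    coeff m (∏ j ∈ Icc 1 d, subst (X ^ j : R⟦X⟧) (F j)) =
      ∑ p : m.Partition, ∏ j ∈ p.parts.toFinset, coeff (p.parts.count j) (F j) := by
  classical
  have hcoeff (j : ℕ) (hj : j ∈ Icc 1 d) (t : ℕ) :
      coeff t (subst (X ^ j : R⟦X⟧) (F j)) = if j ∣ t then coeff (t / j) (F j) else 0 := by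
    rw [coeff_subst_X_pow (by grind)]
    rfl
  rw [coeff_prod]
  refine (sum_of_injOn Nat.Partition.toFinsuppAntidiag
    (Nat.Partition.toFinsuppAntidiag_injective m).injOn ?_ ?_ ?_).symm
  · exact fun p _ => finsuppAntidiag_mono (Icc_subset_Icc_right hmd) m
      p.toFinsuppAntidiag_mem_finsuppAntidiag
  · intro l hl hl'
    by_contra hne
    obtain ⟨p, rfl⟩ := Nat.Partition.exists_toFinsuppAntidiag_eq_s9 (by simp) hl fun j hj => by
      by_contra hndvd
      exact hne (prod_eq_zero hj (by rw [hcoeff j hj, if_neg hndvd]))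
    exact hl' ⟨p, mem_coe.2 (mem_univ p), rfl⟩
  · intro p _
    have hsub : p.parts.toFinset ⊆ Icc 1 d := fun j hj => by
      rw [Multiset.mem_toFinset] at hj
      exact mem_Icc.2 ⟨p.parts_pos hj, (p.le_of_mem_parts hj).trans hmd⟩
    refine (prod_subset hsub fun j _ hj => ?_).trans (prod_congr rfl fun j hj => ?_)
    · rw [Multiset.count_eq_zero.2 (by simpa using hj), coeff_zero_eq_constantCoeff, hF]
    · rw [show p.toFinsuppAntidiag j = p.parts.count j * j from rfl, hcoeff j hj,
        if_pos (dvd_mul_left _ _), Nat.mul_div_cancel _ (by grind)]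

end CommRing

section Field

variable {k : Type*} [Field k]

theorem coeff_one_sub_C_mul_X_mul_inv (q b : k) {c : ℕ} (hc : c ≠ 0) :
    coeff c ((1 - C (q * b) * X) * (1 - C b * X)⁻¹) = (1 - q) * b ^ c := by
  have key : (1 - C (q * b) * X) * (1 - C b * X)⁻¹ =
      mk fun c => if c = 0 then 1 else (1 - q) * b ^ c := by
    refine ((eq_mul_inv_iff_mul_eq (by simp)).2 ?_).symm
    ext (_ | _ | c) <;> simp [mul_sub, ← mul_assoc, coeff_succ_mul_X] <;> ring
  rw [key, coeff_mk, if_neg hc]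

theorem expand_inv (j : ℕ) (hj : j ≠ 0) (φ : k⟦X⟧) :
    expand j hj φ⁻¹ = (expand j hj φ)⁻¹ := by
  by_cases h : constantCoeff φ = 0
  · rw [inv_eq_zero.2 h, inv_eq_zero.2 (by simpa), map_zero]
  · rw [eq_inv_iff_mul_eq_one (by simpa), ← map_mul, PowerSeries.inv_mul_cancel _ h, map_one]

theorem one_sub_C_mul_X_pow_mul_inv_eq_subst (a b : k) {j : ℕ} (hj : j ≠ 0) :
    (1 - C a * X ^ j) * (1 - C b * X ^ j)⁻¹ =
      subst (X ^ j : k⟦X⟧) ((1 - C a * X) * (1 - C b * X)⁻¹) := by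
  simp [← expand_apply j hj, expand_inv, expand_C]

theorem coeff_prod_one_sub_C_mul_X_pow_mul_inv (q b : k) {m d : ℕ} (hmd : m ≤ d) :
    coeff m (∏ j ∈ Icc 1 d, (1 - C (q * b) * X ^ j) * (1 - C b * X ^ j)⁻¹) =
      ∑ p : m.Partition, (1 - q) ^ p.parts.toFinset.card * b ^ Multiset.card p.parts := by
  rw [prod_congr rfl fun j hj => one_sub_C_mul_X_pow_mul_inv_eq_subst _ _ (by grind),
    coeff_prod_subst_X_pow_eq_sum_partitions _ (fun _ => by simp) hmd]
  refine sum_congr rfl fun p _ => ?_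
  rw [prod_congr rfl fun j hj => coeff_one_sub_C_mul_X_mul_inv q b (by simpa using hj),
    prod_mul_distrib, prod_const, prod_pow_eq_pow_sum, Multiset.toFinset_sum_count_eq]

end Field

end PowerSeries

theorem correction_factor_general (n : ℕ) (d : ℕ) :
    PowerSeries.coeff (R := RatFunc ℚ) d
      (∏ i ∈ Finset.Icc 1 n, ∏ j ∈ Finset.Icc 1 d,
        ((1 - PowerSeries.C (R := RatFunc ℚ) ((RatFunc.X (K := ℚ))⁻¹ ^ i) * (PowerSeries.X) ^ j) *
          (1 - PowerSeries.C (R := RatFunc ℚ) ((RatFunc.X (K := ℚ))⁻¹ ^ (i+1)) * (PowerSeries.X) ^ j)⁻¹))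
    = ∑ c ∈ Finset.Nat.antidiagonalTuple n d, ∏ i : Fin n,
        ∑ ρ : Nat.Partition (c i),
          (1 - RatFunc.X (K := ℚ)) ^ (ρ.parts.toFinset.card) *
            ((RatFunc.X (K := ℚ))⁻¹) ^ ((i.val + 2) * Multiset.card ρ.parts) := by
  set q : RatFunc ℚ := RatFunc.X
  have hq : q ≠ 0 := RatFunc.X_ne_zero
  rw [← Ico_add_one_right_eq_Icc, prod_Ico_eq_prod_range, Nat.add_sub_cancel,
    ← Fin.prod_univ_eq_prod_range, coeff_prod_fin_eq_sum_antidiagonalTuple]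
  refine sum_congr rfl fun c hc => prod_congr rfl fun i _ => ?_
  have hci : c i ≤ d := by
    rw [Nat.mem_antidiagonalTuple] at hc
    exact hc ▸ single_le_sum (fun _ _ => Nat.zero_le _) (mem_univ i)
  have hpow : q⁻¹ ^ (1 + i.val) = q * q⁻¹ ^ (i.val + 2) := by
    rw [show i.val + 2 = (1 + i.val) + 1 by omega, pow_succ, mul_left_comm, mul_inv_cancel₀ hq,
      mul_one]
  simp_rw [hpow, show 1 + i.val + 1 = i.val + 2 by omega, pow_mul]
  exact coeff_prod_one_sub_C_mul_X_pow_mul_inv _ _ hci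

/-- Proposition 4.3 (the correction factor as a sum over multi-partitions): in
Q(q)[[z]],
∏_{i=1}^n ∏_{j=1}^∞ (1 - q^{-i} z^j)/(1 - q^{-(i+1)} z^j)
  = Σ_{ρ ∈ P(n)} (1-q)^{N(ρ)} q^{-M(ρ)} z^{|ρ|},
stated z-adically: for every degree d, the coefficient of z^d in the product of the
factors with 1 ≤ j ≤ d equals the sum over n-tuples of partitions of total size d of
(1-q)^{Σ_i N(ρ^(i))} q^{-Σ_i (i+1)·(number of parts of ρ^(i))}, organized by the
composition (|ρ^(1)|, ..., |ρ^(n)|) of d. Here the index i ∈ {1,...,n} corresponds to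
`i' : Fin n` via i = i'.val + 1, so i+1 = i'.val + 2. -/
theorem correction_factor (n : ℕ) (hn : 1 ≤ n) (d : ℕ) :
    PowerSeries.coeff (R := RatFunc ℚ) d
      (∏ i ∈ Finset.Icc 1 n, ∏ j ∈ Finset.Icc 1 d,
        ((1 - PowerSeries.C (R := RatFunc ℚ) ((RatFunc.X (K := ℚ))⁻¹ ^ i) * (PowerSeries.X) ^ j) *
          (1 - PowerSeries.C (R := RatFunc ℚ) ((RatFunc.X (K := ℚ))⁻¹ ^ (i+1)) * (PowerSeries.X) ^ j)⁻¹))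
    = ∑ c ∈ Finset.Nat.antidiagonalTuple n d, ∏ i : Fin n,
        ∑ ρ : Nat.Partition (c i),
          (1 - RatFunc.X (K := ℚ)) ^ (ρ.parts.toFinset.card) *
            ((RatFunc.X (K := ℚ))⁻¹) ^ ((i.val + 2) * Multiset.card ρ.parts) :=
  correction_factor_general n d
end
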